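/- arXiv:1912.13404 — 5 statements merged into one kernel-verified Lean document; each statement's English description precedes it below -/
import Mathlib

section
/- Consider a multilayer network model with n nodes and m layers. Let F be a graph with node set V(F) ⊂ {1,…,n}, |V(F)| = r nodes and |E(F)| = s edges, and let i ∈ V(F) be a node with deg_F(i) = r−1. Select an index k* uniformly at random from {1,…,m}, independently of the layers. Then: (i) P(G_{k*} ⊇ F) = m^{−1} μ_rs, where μ_rs = ∑_{k=1}^m E[(X_k)_r Y_k^s]/(n)_r; and (ii) P(deg_{G_{k*}}(i) = t | G_{k*} ⊇ F) = Bin_rs(P_n)(t − r + 1) for all t, where P_n is the averaged layer type distribution. Here G_{k*} ⊇ F means V(G_{k*}) ⊇ V(F) and E(G_{k*}) ⊇ E(F). -/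
open MeasureTheory Finset Filter
open scoped Classical ENNReal Topology

noncomputable section

/-! ### Multilayer network model -/

/-- A realization of a single layer: its vertex set and its edge set. -/
abbrev Layer (n : ℕ) := Finset (Fin n) × Finset (Sym2 (Fin n))

/-- A realization of the whole multilayer model: one layer realization per layer index. -/
abbrev Config (n m : ℕ) := Fin m → Layer n

/-- The unordered pairs of distinct elements of a finite set `W`. -/
def pairsIn {V : Type*} (W : Finset V) : Finset (Sym2 V) :=
  W.sym2.filter fun e => ¬ e.IsDiag

/-- The probability mass of one layer realization `g` for a layer of deterministic
type `(x, y)`: the vertex set is a uniformly random `x`-subset of the `n` nodes, and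
given the vertex set each pair of its vertices is an edge independently with
probability `y`. -/
def layerDensity (n x : ℕ) (y : ℝ) (g : Layer n) : ℝ :=
  (if g.1.card = x then ((n.choose x : ℝ))⁻¹ else 0) *
    (if g.2 ⊆ pairsIn g.1 then y ^ g.2.card * (1 - y) ^ ((pairsIn g.1).card - g.2.card) else 0)

/-- The probability mass of one layer realization `g` when the layer type is random
with distribution `p`. -/
def layerMixDensity (n : ℕ) (p : Measure (ℕ × ℝ)) (g : Layer n) : ℝ :=
  ∫ ty, layerDensity n ty.1 ty.2 g ∂p

/-- The probability mass of a configuration of the whole model: layers are mutually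
independent, layer `k` having (random) type with distribution `p k`. -/
def modelDensity (n m : ℕ) (p : Fin m → Measure (ℕ × ℝ)) (g : Config n m) : ℝ :=
  ∏ k, layerMixDensity n (p k) (g k)

/-- Probability of an event `A` under the multilayer network model. -/
def modelProb (n m : ℕ) (p : Fin m → Measure (ℕ × ℝ)) (A : Config n m → Prop) : ℝ :=
  ∑ g : Config n m, if A g then modelDensity n m p g else 0

/-- A layer type distribution is valid for `n` nodes if it is a probability measure
concentrated on `{0, …, n} × [0, 1]`. -/
def ValidTypes (n : ℕ) (p : Measure (ℕ × ℝ)) : Prop :=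
  IsProbabilityMeasure p ∧ p {ty : ℕ × ℝ | ty.1 ≤ n ∧ 0 ≤ ty.2 ∧ ty.2 ≤ 1}ᶜ = 0

/-- The averaged layer type distribution `P_n`. -/
def avgMeasure {m : ℕ} (p : Fin m → Measure (ℕ × ℝ)) : Measure (ℕ × ℝ) :=
  ((m : ℝ≥0∞))⁻¹ • ∑ k, p k

/-! ### Graphs determined by edge sets -/

/-- The simple graph on `V` whose edges are the non-diagonal members of `E`. -/
def graphOf {V : Type*} (E : Finset (Sym2 V)) : SimpleGraph V where
  Adj i j := i ≠ j ∧ s(i, j) ∈ E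
  symm := by
    constructor
    intro i j h
    exact ⟨h.1.symm, by rw [Sym2.eq_swap]; exact h.2⟩
  loopless := ⟨fun i h => h.1 rfl⟩

/-- The edge set of the overlay graph: the union of the edge sets of all layers. -/
def overlayEdges {n m : ℕ} (g : Config n m) : Finset (Sym2 (Fin n)) :=
  Finset.univ.biUnion fun k => (g k).2

/-- Degree of node `i` in the graph with edge set `E`. -/
def degreeOf {V : Type*} [Fintype V] (E : Finset (Sym2 V)) (i : V) : ℕ :=
  (Finset.univ.filter fun j => (graphOf E).Adj i j).card

/-- Number of vertices of the connected component of `i` in `G`. -/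
def compSize {V : Type*} [Fintype V] (G : SimpleGraph V) (i : V) : ℕ :=
  Nat.card {j : V // G.Reachable i j}

/-- The size `N₁(G)` of the largest connected component of `G`. -/
def largestComp {V : Type*} [Fintype V] (G : SimpleGraph V) : ℕ :=
  Finset.univ.sup fun i => compSize G i

/-- The size `N₂(G)` of the second largest connected component of `G`
(zero when `G` is connected). -/
def secondComp {V : Type*} [Fintype V] (G : SimpleGraph V) : ℕ :=
  Finset.univ.sup fun j =>
    if ∃ i, compSize G i = largestComp G ∧ ¬ G.Reachable i j then compSize G j else 0

/-- The set `B_t(G)` of vertices whose connected component has more than `t` vertices. -/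
def bigCompSet {V : Type*} [Fintype V] (G : SimpleGraph V) (t : ℕ) : Finset V :=
  Finset.univ.filter fun i => t < compSize G i

/-! ### Distributions on ℕ -/

/-- The binomial probability mass function `Bin(x, y)(t)`. -/
def binPdf (x : ℕ) (y : ℝ) (t : ℕ) : ℝ := (x.choose t : ℝ) * y ^ t * (1 - y) ^ (x - t)

/-- Convolution of two probability mass functions on ℕ. -/
def pmfConv (f g : ℕ → ℝ) (t : ℕ) : ℝ := ∑ s ∈ Finset.range (t + 1), f s * g (t - s)

/-- `k`-fold convolution power of a probability mass function on ℕ. -/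
def pmfConvPow (g : ℕ → ℝ) : ℕ → ℕ → ℝ
  | 0 => fun t => if t = 0 then 1 else 0
  | k + 1 => pmfConv (pmfConvPow g k) g

/-- The compound Poisson probability mass function `CPoi(λ, g)`. -/
def cpoi (lam : ℝ) (g : ℕ → ℝ) (t : ℕ) : ℝ :=
  ∑' k : ℕ, Real.exp (-lam) * lam ^ k / (Nat.factorial k) * pmfConvPow g k t

/-- Extension by zero of a pmf on ℕ to ℤ. -/
def zext (f : ℕ → ℝ) (z : ℤ) : ℝ := if 0 ≤ z then f z.toNat else 0

/-- The cross-factorial moment `(P)_{rs} = ∫ (x)_r y^s P(dx,dy)`. -/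
def crossMoment (P : Measure (ℕ × ℝ)) (r s : ℕ) : ℝ :=
  ∫ ty, (ty.1.descFactorial r : ℝ) * ty.2 ^ s ∂P

/-- The mixed binomial probability mass function `Bin_{rs}(P)(t)`. -/
def binMix (P : Measure (ℕ × ℝ)) (r s : ℕ) (t : ℕ) : ℝ :=
  (∫ ty, binPdf (ty.1 - r) ty.2 t * (ty.1.descFactorial r : ℝ) * ty.2 ^ s ∂P) /
    crossMoment P r s

/-- All unordered pairs of distinct elements of `Fin n`. -/
def allPairs (n : ℕ) : Finset (Sym2 (Fin n)) := Finset.univ.filter fun e => ¬ e.IsDiag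

/-- `Bin⁺(x, y)(t)`: the probability that the connected component of a fixed vertex of
a Bernoulli random graph on `x + 1` vertices with edge probability `y` has `t + 1`
vertices. -/
def binPlusPdf (x : ℕ) (y : ℝ) (t : ℕ) : ℝ :=
  ∑ E ∈ (allPairs (x + 1)).powerset,
    if compSize (graphOf E) 0 = t + 1 then
      y ^ E.card * (1 - y) ^ ((allPairs (x + 1)).card - E.card)
    else 0

/-- The mixed probability mass function `Bin⁺_{rs}(P)(t)`. -/
def binMixPlus (P : Measure (ℕ × ℝ)) (r s : ℕ) (t : ℕ) : ℝ :=
  (∫ ty, binPlusPdf (ty.1 - r) ty.2 t * (ty.1.descFactorial r : ℝ) * ty.2 ^ s ∂P) /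
    crossMoment P r s

/-- Total variation distance between two probability mass functions on ℕ. -/
def dtvN (f g : ℕ → ℝ) : ℝ := (1 / 2) * ∑' t : ℕ, |f t - g t|

/-! ### Galton–Watson quantities -/

/-- Survival probability `ρ(f) = 1 - min {s ≥ 0 : ∑ₓ f(x) sˣ = s}` of a Galton–Watson
branching process with offspring distribution `f`. -/
def gwSurvival (f : ℕ → ℝ) : ℝ :=
  1 - sInf {s : ℝ | 0 ≤ s ∧ ∑' x : ℕ, f x * s ^ x = s}

/-- The distribution of the exploration queue length `Q_t` of a Galton–Watson process
with offspring distribution `f`: `gwQueue f t r = P(Q_t = r)`, where `Q_0 = 1` and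
`Q_t = 1(Q_{t-1} > 0) (Q_{t-1} - 1 + Z_t)` with i.i.d. `f`-distributed `Z_t`. -/
def gwQueue (f : ℕ → ℝ) : ℕ → ℕ → ℝ
  | 0 => fun r => if r = 1 then 1 else 0
  | t + 1 => fun r =>
      (if r = 0 then gwQueue f t 0 else 0) +
        ∑' q : ℕ, if q ≤ r then gwQueue f t (q + 1) * f (r - q) else 0

/-- `ρ_τ(f) = P(Q_τ > 0)`: the probability that the total progeny of a Galton–Watson
process with offspring distribution `f` exceeds `τ`. -/
def gwTail (f : ℕ → ℝ) (τ : ℕ) : ℝ := 1 - gwQueue f τ 0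

/-! ### Model statistics -/

/-- The model degree distribution `f⁽ⁿ⁾`. -/
def modelDegreeDist (n m : ℕ) (p : Fin m → Measure (ℕ × ℝ)) (t : ℕ) : ℝ :=
  (n : ℝ)⁻¹ * ∑ i : Fin n, modelProb n m p fun g => degreeOf (overlayEdges g) i = t

/-- Numerator of the model clustering coefficient. -/
def clusterNum (n m : ℕ) (p : Fin m → Measure (ℕ × ℝ)) : ℝ :=
  ∑ i : Fin n, ∑ j : Fin n, ∑ k : Fin n,
    if i ≠ j ∧ i ≠ k ∧ j ≠ k then
      modelProb n m p fun g =>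
        s(i, j) ∈ overlayEdges g ∧ s(i, k) ∈ overlayEdges g ∧ s(j, k) ∈ overlayEdges g
    else 0

/-- Denominator of the model clustering coefficient. -/
def clusterDen (n m : ℕ) (p : Fin m → Measure (ℕ × ℝ)) : ℝ :=
  ∑ i : Fin n, ∑ j : Fin n, ∑ k : Fin n,
    if i ≠ j ∧ i ≠ k ∧ j ≠ k then
      modelProb n m p fun g => s(i, j) ∈ overlayEdges g ∧ s(i, k) ∈ overlayEdges g
    else 0

/-- The model clustering coefficient `τ⁽ⁿ⁾`. -/
def clusterCoeff (n m : ℕ) (p : Fin m → Measure (ℕ × ℝ)) : ℝ :=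
  clusterNum n m p / clusterDen n m p

/-- Numerator of the clustering spectrum at degree `t`. -/
def spectrumNum (n m : ℕ) (p : Fin m → Measure (ℕ × ℝ)) (t : ℕ) : ℝ :=
  ∑ i : Fin n, ∑ j : Fin n, ∑ k : Fin n,
    if i ≠ j ∧ i ≠ k ∧ j ≠ k then
      modelProb n m p fun g =>
        degreeOf (overlayEdges g) i = t ∧
          s(i, j) ∈ overlayEdges g ∧ s(i, k) ∈ overlayEdges g ∧ s(j, k) ∈ overlayEdges g
    else 0

/-- Denominator of the clustering spectrum at degree `t`. -/
def spectrumDen (n m : ℕ) (p : Fin m → Measure (ℕ × ℝ)) (t : ℕ) : ℝ :=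
  ∑ i : Fin n, ∑ j : Fin n, ∑ k : Fin n,
    if i ≠ j ∧ i ≠ k ∧ j ≠ k then
      modelProb n m p fun g =>
        degreeOf (overlayEdges g) i = t ∧
          s(i, j) ∈ overlayEdges g ∧ s(i, k) ∈ overlayEdges g
    else 0

/-- The clustering spectrum `σ⁽ⁿ⁾(t)`. -/
def clusterSpectrum (n m : ℕ) (p : Fin m → Measure (ℕ × ℝ)) (t : ℕ) : ℝ :=
  spectrumNum n m p t / spectrumDen n m p t

/-- The normalised cross moment `p_{rs}(k) = E[(X_k)_r Y_k^s] / (n)_r` of layer `k`. -/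
def pRS (n : ℕ) {m : ℕ} (p : Fin m → Measure (ℕ × ℝ)) (r s : ℕ) (k : Fin m) : ℝ :=
  (∫ ty, (ty.1.descFactorial r : ℝ) * ty.2 ^ s ∂(p k)) / (n.descFactorial r : ℝ)

/-- `μ_{rs} = ∑ₖ p_{rs}(k)`. -/
def muRS (n : ℕ) {m : ℕ} (p : Fin m → Measure (ℕ × ℝ)) (r s : ℕ) : ℝ :=
  ∑ k, pRS n p r s k

/-- `μ_{rs,tu} = ∑ₖ p_{rs}(k) p_{tu}(k)`. -/
def muRSTU (n : ℕ) {m : ℕ} (p : Fin m → Measure (ℕ × ℝ)) (r s t u : ℕ) : ℝ :=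
  ∑ k, pRS n p r s k * pRS n p t u k

/-- Weak convergence of measures on `ℕ × ℝ`, tested against bounded continuous
functions. -/
def WeakConvNR (Pn : ℕ → Measure (ℕ × ℝ)) (P : Measure (ℕ × ℝ)) : Prop :=
  ∀ φ : ℕ × ℝ → ℝ, Continuous φ → (∃ C, ∀ z, |φ z| ≤ C) →
    Tendsto (fun n => ∫ z, φ z ∂(Pn n)) atTop (𝓝 (∫ z, φ z ∂P))

/-- The pmf of `∑ₖ hₖ` for independent random variables with pmfs `h k`. -/
def pmfConvFamily {m : ℕ} (h : Fin m → ℕ → ℝ) (t : ℕ) : ℝ :=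
  ∑ v ∈ Finset.univ.filter (fun v : Fin m → Fin (t + 1) => ∑ k, (v k : ℕ) = t),
    ∏ k, h k (v k : ℕ)

/-- The pmf of `B·T` where `B ~ Ber(q)` and `T` has pmf `h`, independent. -/
def berTimes (q : ℝ) (h : ℕ → ℝ) (t : ℕ) : ℝ := (if t = 0 then 1 - q else 0) + q * h t

/-- The distribution `f_{τ,n}` of `∑ₖ Bₖ Tₖ` with independent `Bₖ ~ Ber(xₖ/(n-τ))`
and `Tₖ ~ Bin⁺(xₖ - 1, yₖ)`. -/
def upperOffspring (n τ : ℕ) {m : ℕ} (θ : Fin m → ℕ × ℝ) : ℕ → ℝ :=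
  pmfConvFamily fun k =>
    berTimes (((θ k).1 : ℝ) / ((n - τ : ℕ) : ℝ)) (binPlusPdf ((θ k).1 - 1) (θ k).2)

end

noncomputable section

namespace SubgraphAux

open Finset

/-! ### Pure combinatorics helpers -/

lemma sum_powerset_binom {β : Type*} [DecidableEq β] (D : Finset β) (y : ℝ) :
    ∑ E ∈ D.powerset, y ^ E.card * (1 - y) ^ (D.card - E.card) = 1 := by
  calc ∑ E ∈ D.powerset, y ^ E.card * (1 - y) ^ (D.card - E.card)
      = ∑ E ∈ D.powerset, (∏ _x ∈ E, y) * ∏ _x ∈ D \ E, (1 - y) := by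
        refine Finset.sum_congr rfl fun E hE => ?_
        rw [Finset.prod_const, Finset.prod_const,
          Finset.card_sdiff_of_subset (Finset.mem_powerset.mp hE)]
    _ = ∏ _x ∈ D, (y + (1 - y)) := (Finset.prod_add _ _ _).symm
    _ = 1 := by simp

lemma sum_powerset_binom_card {β : Type*} [DecidableEq β] (A : Finset β) (y : ℝ) (u : ℕ) :
    ∑ a ∈ A.powerset, (if a.card = u then y ^ a.card * (1 - y) ^ (A.card - a.card) else 0)
      = (A.card.choose u : ℝ) * (y ^ u * (1 - y) ^ (A.card - u)) := by
  classical
  rw [← Finset.sum_filter, ← Finset.powersetCard_eq_filter]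
  have hcong : ∀ a ∈ A.powersetCard u,
      y ^ a.card * (1 - y) ^ (A.card - a.card) = y ^ u * (1 - y) ^ (A.card - u) :=
    fun a ha => by rw [(Finset.mem_powersetCard.mp ha).2]
  rw [Finset.sum_congr rfl hcong, Finset.sum_const, Finset.card_powersetCard, nsmul_eq_mul]

lemma sum_powerset_union {β : Type*} [DecidableEq β] {A B : Finset β} (hAB : Disjoint A B)
    (F : Finset β → ℝ) :
    ∑ E ∈ (A ∪ B).powerset, F E = ∑ a ∈ A.powerset, ∑ b ∈ B.powerset, F (a ∪ b) := by
  rw [← Finset.sum_product']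
  refine Finset.sum_nbij' (fun E => (E ∩ A, E ∩ B)) (fun x => x.1 ∪ x.2) ?_ ?_ ?_ ?_ ?_
  · intro E hE
    rw [Finset.mem_product]
    exact ⟨Finset.mem_powerset.mpr Finset.inter_subset_right,
      Finset.mem_powerset.mpr Finset.inter_subset_right⟩
  · intro x hx
    rw [Finset.mem_product] at hx
    exact Finset.mem_powerset.mpr
      (Finset.union_subset_union (Finset.mem_powerset.mp hx.1) (Finset.mem_powerset.mp hx.2))
  · intro E hE
    show (E ∩ A) ∪ (E ∩ B) = E
    rw [← Finset.inter_union_distrib_left,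
      Finset.inter_eq_left.mpr (Finset.mem_powerset.mp hE)]
  · intro x hx
    rw [Finset.mem_product] at hx
    have ha := Finset.mem_powerset.mp hx.1
    have hb := Finset.mem_powerset.mp hx.2
    have hdB : ∀ e ∈ x.2, e ∉ A := fun e he => Finset.disjoint_right.mp hAB (hb he)
    have hdA : ∀ e ∈ x.1, e ∉ B := fun e he => Finset.disjoint_left.mp hAB (ha he)
    have h1 : (x.1 ∪ x.2) ∩ A = x.1 := by
      ext e
      simp only [Finset.mem_inter, Finset.mem_union]
      constructor
      · rintro ⟨h | h, hA⟩
        · exact h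
        · exact absurd hA (hdB e h)
      · intro h
        exact ⟨Or.inl h, ha h⟩
    have h2 : (x.1 ∪ x.2) ∩ B = x.2 := by
      ext e
      simp only [Finset.mem_inter, Finset.mem_union]
      constructor
      · rintro ⟨h | h, hB⟩
        · exact absurd hB (hdA e h)
        · exact h
      · intro h
        exact ⟨Or.inr h, hb h⟩
    show ((x.1 ∪ x.2) ∩ A, (x.1 ∪ x.2) ∩ B) = x
    rw [h1, h2]
  · intro E hE
    show F E = F ((E ∩ A) ∪ (E ∩ B))
    rw [← Finset.inter_union_distrib_left,
      Finset.inter_eq_left.mpr (Finset.mem_powerset.mp hE)]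

lemma choose_le_two_pow {a u : ℕ} : a.choose u ≤ 2 ^ a := by
  by_cases h : u ≤ a
  · calc a.choose u ≤ ∑ i ∈ Finset.range (a + 1), a.choose i :=
        Finset.single_le_sum (fun i _ => Nat.zero_le _) (Finset.mem_range.mpr (by omega))
      _ = 2 ^ a := Nat.sum_range_choose a
  · rw [Nat.choose_eq_zero_of_lt (by omega)]
    exact Nat.zero_le _

lemma choose_ratio {n r x : ℕ} (hrx : r ≤ x) (hxn : x ≤ n) :
    ((n - r).choose (x - r) : ℝ) * ((n.choose x : ℝ))⁻¹
      = (x.descFactorial r : ℝ) / (n.descFactorial r : ℝ) := by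
  have h1 : 0 < n.choose x := Nat.choose_pos hxn
  have h2 : 0 < n.descFactorial r := Nat.pos_of_ne_zero fun h =>
    absurd (Nat.descFactorial_eq_zero_iff_lt.mp h) (by omega)
  have key : n.choose x * x.descFactorial r = n.descFactorial r * (n - r).choose (x - r) := by
    rw [Nat.descFactorial_eq_factorial_mul_choose x r, Nat.descFactorial_eq_factorial_mul_choose n r,
      mul_left_comm, Nat.choose_mul (n := n) hrx]
    ring
  have keyR : (n.choose x : ℝ) * (x.descFactorial r : ℝ)
      = (n.descFactorial r : ℝ) * ((n - r).choose (x - r) : ℝ) := by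
    exact_mod_cast congrArg (fun t : ℕ => (t : ℝ)) key
  have h1R : (n.choose x : ℝ) ≠ 0 := by positivity
  have h2R : (n.descFactorial r : ℝ) ≠ 0 := by positivity
  field_simp
  linarith [keyR]

/-! ### Degree helpers -/

lemma mem_pairsIn {V : Type*} {W : Finset V} {a b : V} :
    s(a, b) ∈ pairsIn W ↔ (a ∈ W ∧ b ∈ W) ∧ a ≠ b := by
  rw [pairsIn, Finset.mem_filter, Finset.mk_mem_sym2_iff, Sym2.mk_isDiag_iff]

lemma not_isDiag_of_mem_pairsIn {V : Type*} {W : Finset V} {e : Sym2 V}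
    (h : e ∈ pairsIn W) : ¬ e.IsDiag := (Finset.mem_filter.mp h).2

lemma pairsIn_mono {V : Type*} {W1 W2 : Finset V} (h : W1 ⊆ W2) :
    pairsIn W1 ⊆ pairsIn W2 := by
  intro e he
  rw [pairsIn, Finset.mem_filter] at he ⊢
  exact ⟨Finset.sym2_mono h he.1, he.2⟩

lemma exists_eq_mk_of_mem {V : Type*} (i : V) :
    ∀ e : Sym2 V, i ∈ e → ∃ j, e = s(i, j) := by
  intro e
  induction e using Sym2.ind with
  | _ a b =>
    intro hie
    rcases Sym2.mem_iff.mp hie with rfl | rfl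
    · exact ⟨b, rfl⟩
    · exact ⟨a, Sym2.eq_swap⟩

lemma degreeOf_mono {V : Type*} [Fintype V] {E1 E2 : Finset (Sym2 V)} (h : E1 ⊆ E2) (i : V) :
    degreeOf E1 i ≤ degreeOf E2 i := by
  refine Finset.card_le_card (fun j hj => ?_)
  rw [Finset.mem_filter] at hj ⊢
  exact ⟨hj.1, (⟨hj.2.1, h hj.2.2⟩ : i ≠ j ∧ s(i, j) ∈ E2)⟩

lemma degreeOf_eq_card {V : Type*} [Fintype V] [DecidableEq V] (E : Finset (Sym2 V))
    (hnd : ∀ e ∈ E, ¬ e.IsDiag) (i : V) :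
    degreeOf E i = (E.filter fun e => i ∈ e).card := by
  rw [degreeOf]
  apply Finset.card_bij (fun j _ => s(i, j))
  · intro j hj
    simp only [Finset.mem_filter, Finset.mem_univ, true_and] at hj ⊢
    simp only [graphOf] at hj ⊢
    exact ⟨hj.2, Sym2.mem_mk_left i j⟩
  · intro a ha b hb hab
    exact Sym2.congr_right.mp hab
  · intro e he
    rw [Finset.mem_filter] at he
    obtain ⟨heE, hie⟩ := he
    obtain ⟨j, rfl⟩ := exists_eq_mk_of_mem i e hie
    refine ⟨j, ?_, rfl⟩
    simp only [Finset.mem_filter, Finset.mem_univ, true_and]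
    simp only [graphOf]
    refine ⟨fun hij => hnd _ heE (Sym2.mk_isDiag_iff.mpr hij), heE⟩

lemma degreeOf_pairsIn {n : ℕ} {W : Finset (Fin n)} {i : Fin n} (hi : i ∈ W) :
    degreeOf (pairsIn W) i = W.card - 1 := by
  rw [degreeOf, show (Finset.univ.filter fun j => (graphOf (pairsIn W)).Adj i j) = W.erase i
    from ?_]
  · exact Finset.card_erase_of_mem hi
  ext j
  simp only [Finset.mem_filter, Finset.mem_univ, true_and, Finset.mem_erase]
  simp only [graphOf]
  rw [mem_pairsIn]
  constructor
  · rintro ⟨hij, ⟨-, hjW⟩, -⟩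
    exact ⟨fun h => hij h.symm, hjW⟩
  · rintro ⟨hji, hjW⟩
    exact ⟨fun h => hji h.symm, ⟨hi, hjW⟩, fun h => hji h.symm⟩

section Inner

variable {n : ℕ} {VF : Finset (Fin n)} {EF : Finset (Sym2 (Fin n))} {r s : ℕ} {i : Fin n}

lemma innerA (hEsub : EF ⊆ pairsIn VF) (hEF : EF.card = s)
    {W : Finset (Fin n)} (hW : VF ⊆ W) (y : ℝ) :
    ∑ E : Finset (Sym2 (Fin n)), (if EF ⊆ E then
        (if E ⊆ pairsIn W then y ^ E.card * (1 - y) ^ ((pairsIn W).card - E.card) else 0)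
      else 0) = y ^ s := by
  classical
  have hEFW : EF ⊆ pairsIn W := hEsub.trans (pairsIn_mono hW)
  have step1 : ∀ E : Finset (Sym2 (Fin n)), (if EF ⊆ E then
      (if E ⊆ pairsIn W then y ^ E.card * (1 - y) ^ ((pairsIn W).card - E.card) else 0) else 0)
      = if E ∈ (pairsIn W).powerset.filter (fun E => EF ⊆ E) then
          y ^ E.card * (1 - y) ^ ((pairsIn W).card - E.card) else 0 := by
    intro E
    by_cases h1 : EF ⊆ E <;> by_cases h2 : E ⊆ pairsIn W <;>
      simp [h1, h2, Finset.mem_powerset]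
  rw [Finset.sum_congr rfl fun E _ => step1 E, Fintype.sum_ite_mem]
  set D := pairsIn W \ EF with hD
  have hDcard : D.card = (pairsIn W).card - s := by
    rw [hD, Finset.card_sdiff_of_subset hEFW, hEF]
  have := Finset.sum_nbij'
    (s := (pairsIn W).powerset.filter fun E => EF ⊆ E) (t := D.powerset)
    (f := fun E => y ^ E.card * (1 - y) ^ ((pairsIn W).card - E.card))
    (g := fun E' => y ^ s * (y ^ E'.card * (1 - y) ^ (D.card - E'.card)))
    (fun E => E \ EF) (fun E' => E' ∪ EF) ?_ ?_ ?_ ?_ ?_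
  · rw [this, ← Finset.mul_sum, sum_powerset_binom, mul_one]
  · intro E hE
    rw [Finset.mem_filter, Finset.mem_powerset] at hE
    exact Finset.mem_powerset.mpr (Finset.sdiff_subset_sdiff hE.1 le_rfl)
  · intro E' hE'
    rw [Finset.mem_powerset] at hE'
    rw [Finset.mem_filter, Finset.mem_powerset]
    exact ⟨Finset.union_subset (hE'.trans Finset.sdiff_subset) hEFW, Finset.subset_union_right⟩
  · intro E hE
    rw [Finset.mem_filter] at hE
    exact Finset.sdiff_union_of_subset hE.2
  · intro E' hE'
    rw [Finset.mem_powerset] at hE'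
    have hdisj : Disjoint E' EF := Finset.disjoint_left.mpr
      (fun e he => (Finset.mem_sdiff.mp (hE' he)).2)
    beta_reduce
    rw [Finset.union_sdiff_cancel_right hdisj]
  · intro E hE
    rw [Finset.mem_filter, Finset.mem_powerset] at hE
    obtain ⟨hEP, hEFE⟩ := hE
    have h1 : s ≤ E.card := hEF ▸ Finset.card_le_card hEFE
    have h2 : E.card ≤ (pairsIn W).card := Finset.card_le_card hEP
    have hs : s ≤ (pairsIn W).card := le_trans h1 h2
    beta_reduce
    have e1 : y ^ E.card = y ^ s * y ^ (E.card - s) := by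
      rw [← pow_add]
      congr 1
      omega
    have e2 : (pairsIn W).card - E.card = D.card - (E.card - s) := by
      rw [hDcard]
      omega
    rw [Finset.card_sdiff_of_subset hEFE, hEF, e1, e2]
    ring

lemma innerC {W : Finset (Fin n)} (y : ℝ) :
    ∑ E : Finset (Sym2 (Fin n)), (if E ⊆ pairsIn W then
        y ^ E.card * (1 - y) ^ ((pairsIn W).card - E.card) else 0) = 1 := by
  classical
  have step1 : ∀ E : Finset (Sym2 (Fin n)), (if E ⊆ pairsIn W then
      y ^ E.card * (1 - y) ^ ((pairsIn W).card - E.card) else 0)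
      = if E ∈ (pairsIn W).powerset then
          y ^ E.card * (1 - y) ^ ((pairsIn W).card - E.card) else 0 := by
    intro E
    by_cases h : E ⊆ pairsIn W <;> simp [h, Finset.mem_powerset]
  rw [Finset.sum_congr rfl fun E _ => step1 E, Fintype.sum_ite_mem, sum_powerset_binom]

lemma innerB (hEsub : EF ⊆ pairsIn VF) (hVF : VF.card = r) (hEF : EF.card = s)
    (hi : i ∈ VF) (hideg : degreeOf EF i = r - 1)
    {W : Finset (Fin n)} (hW : VF ⊆ W) (y : ℝ) (u : ℕ) :
    ∑ E : Finset (Sym2 (Fin n)), (if degreeOf E i = (r - 1) + u ∧ EF ⊆ E then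
        (if E ⊆ pairsIn W then y ^ E.card * (1 - y) ^ ((pairsIn W).card - E.card) else 0)
      else 0) = binPdf (W.card - r) y u * y ^ s := by
  classical
  have hr : 1 ≤ r := hVF ▸ Finset.card_pos.mpr ⟨i, hi⟩
  have hrW : r ≤ W.card := hVF ▸ Finset.card_le_card hW
  have hiW : i ∈ W := hW hi
  have hEFW : EF ⊆ pairsIn W := hEsub.trans (pairsIn_mono hW)
  have hEFnd : ∀ e ∈ EF, ¬ e.IsDiag := fun e he => not_isDiag_of_mem_pairsIn (hEsub he)
  set P := pairsIn W with hP
  set D := P \ EF with hD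
  set A := D.filter (fun e => i ∈ e) with hA
  set B := D.filter (fun e => ¬ i ∈ e) with hB
  have hDsub : D ⊆ P := Finset.sdiff_subset
  have hDcard : D.card = P.card - s := by rw [hD, Finset.card_sdiff_of_subset hEFW, hEF]
  -- cardinality of A
  have hAcard : A.card = W.card - r := by
    have hfilt : A = (P.filter fun e => i ∈ e) \ (EF.filter fun e => i ∈ e) := by
      ext e
      simp only [hA, hD, Finset.mem_filter, Finset.mem_sdiff]
      tauto
    have hPf : (P.filter fun e => i ∈ e).card = W.card - 1 := by
      rw [← degreeOf_eq_card P (fun e he => not_isDiag_of_mem_pairsIn he) i, hP,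
        degreeOf_pairsIn hiW]
    have hEFf : (EF.filter fun e => i ∈ e).card = r - 1 := by
      rw [← degreeOf_eq_card EF hEFnd i, hideg]
    have hsub : (EF.filter fun e => i ∈ e) ⊆ (P.filter fun e => i ∈ e) :=
      Finset.filter_subset_filter _ hEFW
    rw [hfilt, Finset.card_sdiff_of_subset hsub, hPf, hEFf]
    omega
  -- degree computation
  have degkey : ∀ E' : Finset (Sym2 (Fin n)), E' ⊆ D →
      degreeOf (E' ∪ EF) i = (E' ∩ A).card + (r - 1) := by
    intro E' hE'
    have hnd : ∀ e ∈ E' ∪ EF, ¬ e.IsDiag := by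
      intro e he
      rcases Finset.mem_union.mp he with h | h
      · exact not_isDiag_of_mem_pairsIn (hDsub (hE' h))
      · exact hEFnd e h
    rw [degreeOf_eq_card _ hnd, Finset.filter_union]
    have hdisj : Disjoint (E'.filter fun e => i ∈ e) (EF.filter fun e => i ∈ e) := by
      refine Finset.disjoint_left.mpr fun e he1 he2 => ?_
      exact (Finset.mem_sdiff.mp (hE' (Finset.mem_filter.mp he1).1)).2
        (Finset.mem_filter.mp he2).1
    rw [Finset.card_union_of_disjoint hdisj]
    have h1 : E'.filter (fun e => i ∈ e) = E' ∩ A := by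
      ext e
      simp only [Finset.mem_filter, Finset.mem_inter, hA]
      constructor
      · rintro ⟨h, hie⟩
        exact ⟨h, hE' h, hie⟩
      · rintro ⟨h, -, hie⟩
        exact ⟨h, hie⟩
    have h2 : (EF.filter fun e => i ∈ e).card = r - 1 := by
      rw [← degreeOf_eq_card EF hEFnd i, hideg]
    rw [h1, h2]
  -- reduce to a sum over the powerset of D
  have step1 : ∀ E : Finset (Sym2 (Fin n)), (if degreeOf E i = (r - 1) + u ∧ EF ⊆ E then
      (if E ⊆ P then y ^ E.card * (1 - y) ^ (P.card - E.card) else 0) else 0)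
      = if E ∈ (P.powerset.filter fun E => EF ⊆ E) then
          (if degreeOf E i = (r - 1) + u then y ^ E.card * (1 - y) ^ (P.card - E.card) else 0)
        else 0 := by
    intro E
    by_cases h1 : EF ⊆ E <;> by_cases h2 : E ⊆ P <;> by_cases h3 : degreeOf E i = (r - 1) + u <;>
      simp [h1, h2, h3, Finset.mem_powerset]
  rw [Finset.sum_congr rfl fun E _ => step1 E, Fintype.sum_ite_mem]
  have reindex := Finset.sum_nbij'
    (s := P.powerset.filter fun E => EF ⊆ E) (t := D.powerset)
    (f := fun E => if degreeOf E i = (r - 1) + u then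
        y ^ E.card * (1 - y) ^ (P.card - E.card) else 0)
    (g := fun E' => if (E' ∩ A).card = u then
        y ^ s * (y ^ E'.card * (1 - y) ^ (D.card - E'.card)) else 0)
    (fun E => E \ EF) (fun E' => E' ∪ EF) ?_ ?_ ?_ ?_ ?_
  · rw [reindex]
    -- split the powerset of D = A ∪ B
    have hABdisj : Disjoint A B := Finset.disjoint_filter_filter_not D D _
    have hABunion : A ∪ B = D := Finset.filter_union_filter_not_eq _ D
    have hABcard : A.card + B.card = D.card := by
      rw [← Finset.card_union_of_disjoint hABdisj, hABunion]
    rw [show D.powerset = (A ∪ B).powerset by rw [hABunion]]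
    rw [sum_powerset_union hABdisj]
    have inner_b : ∀ a ∈ A.powerset,
        (∑ b ∈ B.powerset, if ((a ∪ b) ∩ A).card = u then
          y ^ s * (y ^ (a ∪ b).card * (1 - y) ^ (D.card - (a ∪ b).card)) else 0)
        = (if a.card = u then y ^ a.card * (1 - y) ^ (A.card - a.card) else 0) * y ^ s := by
      intro a ha
      rw [Finset.mem_powerset] at ha
      have key : ∀ b ∈ B.powerset, (if ((a ∪ b) ∩ A).card = u then
          y ^ s * (y ^ (a ∪ b).card * (1 - y) ^ (D.card - (a ∪ b).card)) else 0)
          = (if a.card = u then y ^ a.card * (1 - y) ^ (A.card - a.card) else 0) * y ^ s *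
            (y ^ b.card * (1 - y) ^ (B.card - b.card)) := by
        intro b hb
        rw [Finset.mem_powerset] at hb
        have hdisj' : Disjoint a b := Finset.disjoint_of_subset_left ha
          (Finset.disjoint_of_subset_right hb hABdisj)
        have hinter : (a ∪ b) ∩ A = a := by
          ext e
          simp only [Finset.mem_inter, Finset.mem_union]
          constructor
          · rintro ⟨h | h, hAe⟩
            · exact h
            · exact absurd hAe (Finset.disjoint_right.mp hABdisj (hb h))
          · intro h
            exact ⟨Or.inl h, ha h⟩
        have hcards : (a ∪ b).card = a.card + b.card := Finset.card_union_of_disjoint hdisj'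
        have hle1 : a.card ≤ A.card := Finset.card_le_card ha
        have hle2 : b.card ≤ B.card := Finset.card_le_card hb
        have hexp : D.card - (a.card + b.card) = (A.card - a.card) + (B.card - b.card) := by
          omega
        rw [hinter, hcards, hexp]
        by_cases hcu : a.card = u <;> simp only [hcu, if_true, if_false, reduceIte]
        · rw [pow_add, pow_add]
          ring
        · simp [hcu]
      rw [Finset.sum_congr rfl key, ← Finset.mul_sum, sum_powerset_binom, mul_one]
    rw [Finset.sum_congr rfl inner_b, ← Finset.sum_mul, sum_powerset_binom_card]
    rw [hAcard, binPdf]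
    ring
  · intro E hE
    rw [Finset.mem_filter, Finset.mem_powerset] at hE
    exact Finset.mem_powerset.mpr (Finset.sdiff_subset_sdiff hE.1 le_rfl)
  · intro E' hE'
    rw [Finset.mem_powerset] at hE'
    rw [Finset.mem_filter, Finset.mem_powerset]
    exact ⟨Finset.union_subset (hE'.trans hDsub) hEFW, Finset.subset_union_right⟩
  · intro E hE
    rw [Finset.mem_filter] at hE
    exact Finset.sdiff_union_of_subset hE.2
  · intro E' hE'
    rw [Finset.mem_powerset] at hE'
    have hdisj : Disjoint E' EF := Finset.disjoint_left.mpr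
      (fun e he => (Finset.mem_sdiff.mp (hE' he)).2)
    beta_reduce
    rw [Finset.union_sdiff_cancel_right hdisj]
  · intro E hE
    rw [Finset.mem_filter, Finset.mem_powerset] at hE
    obtain ⟨hEP, hEFE⟩ := hE
    have hEeq : (E \ EF) ∪ EF = E := Finset.sdiff_union_of_subset hEFE
    have hsubD : E \ EF ⊆ D := Finset.sdiff_subset_sdiff hEP le_rfl
    have hdeg : degreeOf E i = ((E \ EF) ∩ A).card + (r - 1) := by
      have h := degkey (E \ EF) hsubD
      rw [hEeq] at h
      exact h
    have h1 : s ≤ E.card := hEF ▸ Finset.card_le_card hEFE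
    have h2 : E.card ≤ P.card := Finset.card_le_card hEP
    have hcond : (degreeOf E i = (r - 1) + u) ↔ ((E \ EF) ∩ A).card = u := by
      rw [hdeg]
      omega
    beta_reduce
    by_cases hc : degreeOf E i = (r - 1) + u
    · rw [if_pos hc, if_pos (hcond.mp hc)]
      have e1 : y ^ E.card = y ^ s * y ^ (E.card - s) := by
        rw [← pow_add]
        congr 1
        omega
      have e2 : P.card - E.card = D.card - (E.card - s) := by
        rw [hDcard]
        omega
      rw [Finset.card_sdiff_of_subset hEFE, hEF, e1, e2]
      ring
    · rw [if_neg hc, if_neg (fun h => hc (hcond.mpr h))]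

lemma card_supersets (VF : Finset (Fin n)) {x : ℕ} (hx : VF.card ≤ x) :
    (Finset.univ.filter fun W : Finset (Fin n) => W.card = x ∧ VF ⊆ W).card
      = (n - VF.card).choose (x - VF.card) := by
  classical
  have hc : VFᶜ.card = n - VF.card := by
    rw [Finset.card_compl, Fintype.card_fin]
  rw [← hc, ← Finset.card_powersetCard (x - VF.card) VFᶜ]
  apply Finset.card_nbij' (fun W => W \ VF) (fun W' => W' ∪ VF)
  · intro W hW
    rw [Finset.mem_coe, Finset.mem_filter] at hW
    obtain ⟨-, hWx, hVFW⟩ := hW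
    rw [Finset.mem_coe, Finset.mem_powersetCard]
    constructor
    · intro a ha
      rw [Finset.mem_compl]
      exact (Finset.mem_sdiff.mp ha).2
    · rw [Finset.card_sdiff_of_subset hVFW, hWx]
  · intro W' hW'
    rw [Finset.mem_coe, Finset.mem_powersetCard] at hW'
    obtain ⟨hsub, hcard⟩ := hW'
    have hdisj : Disjoint W' VF := Finset.disjoint_left.mpr
      (fun a ha => Finset.mem_compl.mp (hsub ha))
    rw [Finset.mem_coe, Finset.mem_filter]
    refine ⟨Finset.mem_univ _, ?_, Finset.subset_union_right⟩
    rw [Finset.card_union_of_disjoint hdisj, hcard]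
    omega
  · intro W hW
    rw [Finset.mem_coe, Finset.mem_filter] at hW
    exact Finset.sdiff_union_of_subset hW.2.2
  · intro W' hW'
    rw [Finset.mem_coe, Finset.mem_powersetCard] at hW'
    have hdisj : Disjoint W' VF := Finset.disjoint_left.mpr
      (fun a ha => Finset.mem_compl.mp (hW'.1 ha))
    beta_reduce
    rw [Finset.union_sdiff_cancel_right hdisj]

/-! ### Layer sums for fixed type -/

lemma sumLayer_full {x : ℕ} (hx : x ≤ n) (y : ℝ) :
    ∑ g : Layer n, layerDensity n x y g = 1 := by
  classical
  rw [Fintype.sum_prod_type]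
  have key : ∀ W : Finset (Fin n), (∑ E : Finset (Sym2 (Fin n)), layerDensity n x y (W, E))
      = (if W.card = x then ((n.choose x : ℝ))⁻¹ else 0) := by
    intro W
    simp only [layerDensity]
    rw [← Finset.mul_sum Finset.univ _ (if W.card = x then ((n.choose x : ℝ))⁻¹ else 0),
      innerC, mul_one]
  rw [Finset.sum_congr rfl fun W _ => key W, ← Finset.sum_filter]
  have hfilt : (Finset.univ.filter fun W : Finset (Fin n) => W.card = x)
      = Finset.powersetCard x (Finset.univ : Finset (Fin n)) := by
    rw [Finset.powersetCard_eq_filter, Finset.powerset_univ]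
  rw [Finset.sum_const, hfilt, Finset.card_powersetCard, Finset.card_univ, Fintype.card_fin,
    nsmul_eq_mul, mul_inv_cancel₀]
  exact_mod_cast (Nat.choose_pos hx).ne'

lemma sumLayer_A (hEsub : EF ⊆ pairsIn VF) (hVF : VF.card = r) (hEF : EF.card = s)
    {x : ℕ} (hx : x ≤ n) (y : ℝ) :
    ∑ g : Layer n, (if VF ⊆ g.1 ∧ EF ⊆ g.2 then layerDensity n x y g else 0)
      = (x.descFactorial r : ℝ) * y ^ s / (n.descFactorial r : ℝ) := by
  classical
  rw [Fintype.sum_prod_type]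
  have key : ∀ W : Finset (Fin n),
      (∑ E : Finset (Sym2 (Fin n)), if VF ⊆ W ∧ EF ⊆ E then layerDensity n x y (W, E) else 0)
      = (if W.card = x ∧ VF ⊆ W then ((n.choose x : ℝ))⁻¹ else 0) * y ^ s := by
    intro W
    by_cases hVW : VF ⊆ W
    · have hterm : ∀ E : Finset (Sym2 (Fin n)),
          (if VF ⊆ W ∧ EF ⊆ E then layerDensity n x y (W, E) else 0)
          = (if W.card = x then ((n.choose x : ℝ))⁻¹ else 0) *
            (if EF ⊆ E then (if E ⊆ pairsIn W then
              y ^ E.card * (1 - y) ^ ((pairsIn W).card - E.card) else 0) else 0) := by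
        intro E
        unfold layerDensity
        by_cases hE : EF ⊆ E <;> simp [hVW, hE]
      rw [Finset.sum_congr rfl fun E _ => hterm E, ← Finset.mul_sum, innerA hEsub hEF hVW]
      simp [hVW]
    · have : ∀ E : Finset (Sym2 (Fin n)),
          (if VF ⊆ W ∧ EF ⊆ E then layerDensity n x y (W, E) else 0) = 0 := by
        intro E
        simp [hVW]
      rw [Finset.sum_congr rfl fun E _ => this E, Finset.sum_const_zero]
      simp [hVW]
  rw [Finset.sum_congr rfl fun W _ => key W, ← Finset.sum_mul, ← Finset.sum_filter]
  by_cases hrx : r ≤ x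
  · have hcount := card_supersets (x := x) VF (by rw [hVF]; exact hrx)
    rw [hVF] at hcount
    rw [Finset.sum_const, hcount, nsmul_eq_mul, mul_assoc, ← mul_assoc, choose_ratio hrx hx]
    ring
  · have hempty : (Finset.univ.filter fun W : Finset (Fin n) => W.card = x ∧ VF ⊆ W) = ∅ := by
      rw [Finset.filter_eq_empty_iff]
      rintro W - ⟨hWx, hVFW⟩
      exact hrx (hVF ▸ hWx ▸ Finset.card_le_card hVFW)
    rw [hempty, Finset.sum_empty, Nat.descFactorial_eq_zero_iff_lt.mpr (by omega)]
    simp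

lemma sumLayer_B (hEsub : EF ⊆ pairsIn VF) (hVF : VF.card = r) (hEF : EF.card = s)
    (hi : i ∈ VF) (hideg : degreeOf EF i = r - 1)
    {x : ℕ} (hx : x ≤ n) (y : ℝ) (u : ℕ) :
    ∑ g : Layer n, (if degreeOf g.2 i = (r - 1) + u ∧ VF ⊆ g.1 ∧ EF ⊆ g.2 then
        layerDensity n x y g else 0)
      = binPdf (x - r) y u * (x.descFactorial r : ℝ) * y ^ s / (n.descFactorial r : ℝ) := by
  classical
  rw [Fintype.sum_prod_type]
  have key : ∀ W : Finset (Fin n),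
      (∑ E : Finset (Sym2 (Fin n)),
        if degreeOf E i = (r - 1) + u ∧ VF ⊆ W ∧ EF ⊆ E then layerDensity n x y (W, E) else 0)
      = (if W.card = x ∧ VF ⊆ W then ((n.choose x : ℝ))⁻¹ else 0) *
          (binPdf (x - r) y u * y ^ s) := by
    intro W
    by_cases hVW : VF ⊆ W
    · by_cases hWx : W.card = x
      · have hterm : ∀ E : Finset (Sym2 (Fin n)),
            (if degreeOf E i = (r - 1) + u ∧ VF ⊆ W ∧ EF ⊆ E then layerDensity n x y (W, E)
              else 0)
            = (if W.card = x then ((n.choose x : ℝ))⁻¹ else 0) *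
              (if degreeOf E i = (r - 1) + u ∧ EF ⊆ E then (if E ⊆ pairsIn W then
                y ^ E.card * (1 - y) ^ ((pairsIn W).card - E.card) else 0) else 0) := by
          intro E
          unfold layerDensity
          by_cases hE : EF ⊆ E <;> by_cases hdE : degreeOf E i = (r - 1) + u <;>
            simp [hVW, hE, hdE]
        rw [Finset.sum_congr rfl fun E _ => hterm E, ← Finset.mul_sum,
          innerB hEsub hVF hEF hi hideg hVW, hWx]
        simp [hVW, hWx]
      · have : ∀ E : Finset (Sym2 (Fin n)),
            (if degreeOf E i = (r - 1) + u ∧ VF ⊆ W ∧ EF ⊆ E then layerDensity n x y (W, E)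
              else 0) = 0 := by
          intro E
          simp [layerDensity, hWx]
        rw [Finset.sum_congr rfl fun E _ => this E, Finset.sum_const_zero]
        simp [hWx]
    · have : ∀ E : Finset (Sym2 (Fin n)),
          (if degreeOf E i = (r - 1) + u ∧ VF ⊆ W ∧ EF ⊆ E then layerDensity n x y (W, E)
            else 0) = 0 := by
        intro E
        simp [hVW]
      rw [Finset.sum_congr rfl fun E _ => this E, Finset.sum_const_zero]
      simp [hVW]
  rw [Finset.sum_congr rfl fun W _ => key W, ← Finset.sum_mul, ← Finset.sum_filter]
  by_cases hrx : r ≤ x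
  · have hcount := card_supersets (x := x) VF (by rw [hVF]; exact hrx)
    rw [hVF] at hcount
    rw [Finset.sum_const, hcount, nsmul_eq_mul, ← mul_assoc, choose_ratio hrx hx]
    ring
  · have hempty : (Finset.univ.filter fun W : Finset (Fin n) => W.card = x ∧ VF ⊆ W) = ∅ := by
      rw [Finset.filter_eq_empty_iff]
      rintro W - ⟨hWx, hVFW⟩
      exact hrx (hVF ▸ hWx ▸ Finset.card_le_card hVFW)
    rw [hempty, Finset.sum_empty, Nat.descFactorial_eq_zero_iff_lt.mpr (by omega)]
    simp

end Inner

/-! ### Measure-theoretic helpers -/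

section MeasureHelpers

variable {n : ℕ} {μ : Measure (ℕ × ℝ)}

lemma ae_valid (hval : ValidTypes n μ) :
    ∀ᵐ ty ∂μ, ty.1 ≤ n ∧ 0 ≤ ty.2 ∧ ty.2 ≤ 1 := by
  rw [MeasureTheory.ae_iff]
  have h := hval.2
  rw [Set.compl_setOf] at h
  exact h

lemma measurable_slices {F : ℕ × ℝ → ℝ} (hc : ∀ x : ℕ, Measurable fun y => F (x, y)) :
    Measurable F := by
  have h : Measurable fun q : ℝ × ℕ => F (q.2, q.1) := measurable_from_prod_countable_left hc
  exact h.comp measurable_swap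

lemma integrable_of_bounded_valid (hval : ValidTypes n μ) {F : ℕ × ℝ → ℝ}
    (hm : Measurable F) {C : ℝ}
    (hC : ∀ ty : ℕ × ℝ, ty.1 ≤ n → 0 ≤ ty.2 → ty.2 ≤ 1 → |F ty| ≤ C) :
    Integrable F μ := by
  haveI := hval.1
  refine ⟨hm.aestronglyMeasurable, HasFiniteIntegral.of_bounded (C := C) ?_⟩
  filter_upwards [ae_valid hval] with ty hty
  rw [Real.norm_eq_abs]
  exact hC ty hty.1 hty.2.1 hty.2.2

lemma measurable_layerDensity (g : Layer n) :
    Measurable fun ty : ℕ × ℝ => layerDensity n ty.1 ty.2 g := by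
  apply measurable_slices
  intro x
  unfold layerDensity
  by_cases h1 : g.1.card = x <;> by_cases h2 : g.2 ⊆ pairsIn g.1 <;>
    simp only [h1, h2, if_true, if_false, reduceIte] <;> fun_prop

lemma abs_layerDensity_le (g : Layer n) : ∀ ty : ℕ × ℝ, ty.1 ≤ n → 0 ≤ ty.2 → ty.2 ≤ 1 →
    |layerDensity n ty.1 ty.2 g| ≤ 1 := by
  rintro ⟨x, y⟩ hx hy0 hy1
  have h1y : (0:ℝ) ≤ 1 - y := by linarith
  have h1y' : (1:ℝ) - y ≤ 1 := by linarith
  unfold layerDensity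
  have f1nn : (0:ℝ) ≤ (if g.1.card = x then ((n.choose x : ℝ))⁻¹ else 0) := by positivity
  have f1le : (if g.1.card = x then ((n.choose x : ℝ))⁻¹ else 0) ≤ 1 := by
    split
    · rcases Nat.eq_zero_or_pos (n.choose x) with h | h
      · rw [h]
        norm_num
      · exact inv_le_one_of_one_le₀ (by exact_mod_cast h)
    · exact zero_le_one
  have f2nn : (0:ℝ) ≤ (if g.2 ⊆ pairsIn g.1 then
      y ^ g.2.card * (1 - y) ^ ((pairsIn g.1).card - g.2.card) else 0) := by
    split
    · positivity
    · exact le_rfl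
  have f2le : (if g.2 ⊆ pairsIn g.1 then
      y ^ g.2.card * (1 - y) ^ ((pairsIn g.1).card - g.2.card) else 0) ≤ 1 := by
    split
    · have ha1 : y ^ g.2.card ≤ 1 := pow_le_one₀ hy0 hy1
      have ha2 : (1 - y) ^ ((pairsIn g.1).card - g.2.card) ≤ 1 := pow_le_one₀ h1y h1y'
      nlinarith [pow_nonneg hy0 g.2.card, pow_nonneg h1y ((pairsIn g.1).card - g.2.card)]
    · exact zero_le_one
  rw [abs_of_nonneg (mul_nonneg f1nn f2nn)]
  have := mul_le_mul f1le f2le f2nn zero_le_one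
  linarith

lemma integrable_layerDensity (hval : ValidTypes n μ) (g : Layer n) :
    Integrable (fun ty : ℕ × ℝ => layerDensity n ty.1 ty.2 g) μ :=
  integrable_of_bounded_valid hval (measurable_layerDensity g) (abs_layerDensity_le g)

lemma integrable_ite_layerDensity (hval : ValidTypes n μ) (P : Prop) [Decidable P] (g : Layer n) :
    Integrable (fun ty : ℕ × ℝ => if P then layerDensity n ty.1 ty.2 g else 0) μ := by
  haveI := hval.1
  by_cases h : P
  · simpa [h] using integrable_layerDensity hval g
  · simp only [if_neg h]
    exact integrable_const 0

lemma integrable_desc (hval : ValidTypes n μ) (r s : ℕ) :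
    Integrable (fun ty : ℕ × ℝ => (ty.1.descFactorial r : ℝ) * ty.2 ^ s) μ := by
  apply integrable_of_bounded_valid hval (C := (n.descFactorial r : ℝ))
  · apply measurable_slices
    intro x
    fun_prop
  · rintro ⟨x, y⟩ hx hy0 hy1
    rw [abs_mul, abs_pow, Nat.abs_cast, abs_of_nonneg hy0]
    have h1 : (x.descFactorial r : ℝ) ≤ (n.descFactorial r : ℝ) := by
      exact_mod_cast Nat.descFactorial_le r hx
    have h2 : y ^ s ≤ 1 := pow_le_one₀ hy0 hy1
    have h3 : (0:ℝ) ≤ (x.descFactorial r : ℝ) := by positivity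
    nlinarith [pow_nonneg hy0 s]

lemma integrable_binPdf_desc (hval : ValidTypes n μ) (r s u : ℕ) :
    Integrable (fun ty : ℕ × ℝ =>
      binPdf (ty.1 - r) ty.2 u * (ty.1.descFactorial r : ℝ) * ty.2 ^ s) μ := by
  apply integrable_of_bounded_valid hval (C := (2 : ℝ) ^ n * (n.descFactorial r : ℝ))
  · apply measurable_slices
    intro x
    show Measurable fun y : ℝ =>
      (((x - r).choose u : ℕ) : ℝ) * y ^ u * (1 - y) ^ (x - r - u) *
        (x.descFactorial r : ℝ) * y ^ s
    fun_prop
  · rintro ⟨x, y⟩ hx hy0 hy1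
    have h1y : (0:ℝ) ≤ 1 - y := by linarith
    have h1y' : (1:ℝ) - y ≤ 1 := by linarith
    unfold binPdf
    rw [abs_of_nonneg (by positivity)]
    calc ((x - r).choose u : ℝ) * y ^ u * (1 - y) ^ (x - r - u) * (x.descFactorial r : ℝ) * y ^ s
        ≤ (2 : ℝ) ^ n * 1 * 1 * (n.descFactorial r : ℝ) * 1 := by
          gcongr
          · have hc : ((x - r).choose u : ℝ) ≤ (2 : ℝ) ^ (x - r) := by
              exact_mod_cast SubgraphAux.choose_le_two_pow
            have hp : (2 : ℝ) ^ (x - r) ≤ (2 : ℝ) ^ n := by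
              apply pow_le_pow_right₀ (by norm_num) (by omega)
            linarith
          · exact pow_le_one₀ hy0 hy1
          · exact pow_le_one₀ h1y h1y'
          · exact pow_le_one₀ hy0 hy1
      _ = _ := by ring

variable {VF : Finset (Fin n)} {EF : Finset (Sym2 (Fin n))} {r s : ℕ} {i : Fin n}

lemma layerMix_total (hval : ValidTypes n μ) :
    ∑ g : Layer n, layerMixDensity n μ g = 1 := by
  haveI := hval.1
  unfold layerMixDensity
  rw [← MeasureTheory.integral_finset_sum _ (fun g _ => integrable_layerDensity hval g)]
  have hae : (fun ty : ℕ × ℝ => ∑ g : Layer n, layerDensity n ty.1 ty.2 g) =ᵐ[μ]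
      (fun _ => (1:ℝ)) := by
    filter_upwards [ae_valid hval] with ty hty
    exact sumLayer_full hty.1 ty.2
  rw [MeasureTheory.integral_congr_ae hae, MeasureTheory.integral_const, probReal_univ,
    smul_eq_mul, mul_one]

lemma layerMix_A (hval : ValidTypes n μ) (hEsub : EF ⊆ pairsIn VF) (hVF : VF.card = r)
    (hEF : EF.card = s) :
    ∑ g : Layer n, (if VF ⊆ g.1 ∧ EF ⊆ g.2 then layerMixDensity n μ g else 0)
      = (∫ ty, (ty.1.descFactorial r : ℝ) * ty.2 ^ s ∂μ) / (n.descFactorial r : ℝ) := by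
  haveI := hval.1
  have step : ∀ g : Layer n, (if VF ⊆ g.1 ∧ EF ⊆ g.2 then layerMixDensity n μ g else 0)
      = ∫ ty, (if VF ⊆ g.1 ∧ EF ⊆ g.2 then layerDensity n ty.1 ty.2 g else 0) ∂μ := by
    intro g
    by_cases h : VF ⊆ g.1 ∧ EF ⊆ g.2
    · rw [if_pos h]
      unfold layerMixDensity
      exact MeasureTheory.integral_congr_ae (Filter.Eventually.of_forall fun ty => by
        beta_reduce
        rw [if_pos h])
    · rw [if_neg h]
      symm
      simp [h]
  rw [Finset.sum_congr rfl fun g _ => step g,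
    ← MeasureTheory.integral_finset_sum _
      (fun g _ => integrable_ite_layerDensity hval (VF ⊆ g.1 ∧ EF ⊆ g.2) g)]
  have hae : (fun ty : ℕ × ℝ =>
      ∑ g : Layer n, if VF ⊆ g.1 ∧ EF ⊆ g.2 then layerDensity n ty.1 ty.2 g else 0) =ᵐ[μ]
      (fun ty => (ty.1.descFactorial r : ℝ) * ty.2 ^ s / (n.descFactorial r : ℝ)) := by
    filter_upwards [ae_valid hval] with ty hty
    exact sumLayer_A hEsub hVF hEF hty.1 ty.2
  rw [MeasureTheory.integral_congr_ae hae, MeasureTheory.integral_div]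

lemma layerMix_B (hval : ValidTypes n μ) (hEsub : EF ⊆ pairsIn VF) (hVF : VF.card = r)
    (hEF : EF.card = s) (hi : i ∈ VF) (hideg : degreeOf EF i = r - 1) (u : ℕ) :
    ∑ g : Layer n, (if degreeOf g.2 i = (r - 1) + u ∧ VF ⊆ g.1 ∧ EF ⊆ g.2 then
        layerMixDensity n μ g else 0)
      = (∫ ty, binPdf (ty.1 - r) ty.2 u * (ty.1.descFactorial r : ℝ) * ty.2 ^ s ∂μ) /
          (n.descFactorial r : ℝ) := by
  haveI := hval.1
  have step : ∀ g : Layer n,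
      (if degreeOf g.2 i = (r - 1) + u ∧ VF ⊆ g.1 ∧ EF ⊆ g.2 then layerMixDensity n μ g else 0)
      = ∫ ty, (if degreeOf g.2 i = (r - 1) + u ∧ VF ⊆ g.1 ∧ EF ⊆ g.2 then
          layerDensity n ty.1 ty.2 g else 0) ∂μ := by
    intro g
    by_cases h : degreeOf g.2 i = (r - 1) + u ∧ VF ⊆ g.1 ∧ EF ⊆ g.2
    · rw [if_pos h]
      unfold layerMixDensity
      exact MeasureTheory.integral_congr_ae (Filter.Eventually.of_forall fun ty => by
        beta_reduce
        rw [if_pos h])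
    · rw [if_neg h]
      symm
      simp [h]
  rw [Finset.sum_congr rfl fun g _ => step g,
    ← MeasureTheory.integral_finset_sum _
      (fun g _ => integrable_ite_layerDensity hval
        (degreeOf g.2 i = (r - 1) + u ∧ VF ⊆ g.1 ∧ EF ⊆ g.2) g)]
  have hae : (fun ty : ℕ × ℝ =>
      ∑ g : Layer n, if degreeOf g.2 i = (r - 1) + u ∧ VF ⊆ g.1 ∧ EF ⊆ g.2 then
        layerDensity n ty.1 ty.2 g else 0) =ᵐ[μ]
      (fun ty => binPdf (ty.1 - r) ty.2 u * (ty.1.descFactorial r : ℝ) * ty.2 ^ s /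
        (n.descFactorial r : ℝ)) := by
    filter_upwards [ae_valid hval] with ty hty
    exact sumLayer_B hEsub hVF hEF hi hideg hty.1 ty.2 u
  rw [MeasureTheory.integral_congr_ae hae, MeasureTheory.integral_div]

end MeasureHelpers

/-! ### Factorization over layers -/

lemma modelProb_layer {n m : ℕ} (p : Fin m → Measure (ℕ × ℝ))
    (hone : ∀ j, ∑ g : Layer n, layerMixDensity n (p j) g = 1)
    (k : Fin m) (A : Layer n → Prop) :
    modelProb n m p (fun g => A (g k))
      = ∑ x : Layer n, (if A x then layerMixDensity n (p k) x else 0) := by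
  classical
  unfold modelProb modelDensity
  have step : ∀ g : Config n m,
      (if A (g k) then ∏ j, layerMixDensity n (p j) (g j) else 0)
      = ∏ j, (fun j (x : Layer n) =>
          (if j = k then (if A x then (1:ℝ) else 0) else 1) * layerMixDensity n (p j) x)
            j (g j) := by
    intro g
    beta_reduce
    rw [Finset.prod_mul_distrib,
      Finset.prod_ite_eq' Finset.univ k (fun j => if A (g j) then (1:ℝ) else 0)]
    simp only [Finset.mem_univ, if_true]
    split <;> simp
  rw [Finset.sum_congr rfl fun g _ => step g]
  have hps := Finset.prod_univ_sum (fun _ : Fin m => (Finset.univ : Finset (Layer n)))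
    (fun j (x : Layer n) =>
      (if j = k then (if A x then (1:ℝ) else 0) else 1) * layerMixDensity n (p j) x)
  rw [Fintype.piFinset_univ] at hps
  rw [← hps]
  have hj : ∀ j : Fin m, (∑ x : Layer n,
      (if j = k then (if A x then (1:ℝ) else 0) else 1) * layerMixDensity n (p j) x)
      = if j = k then (∑ x : Layer n, if A x then layerMixDensity n (p k) x else 0) else 1 := by
    intro j
    by_cases hjk : j = k
    · subst hjk
      rw [if_pos rfl]
      refine Finset.sum_congr rfl fun x _ => ?_
      rw [if_pos rfl]
      split <;> simp
    · rw [if_neg hjk]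
      calc ∑ x : Layer n, (if j = k then (if A x then (1:ℝ) else 0) else 1) *
            layerMixDensity n (p j) x
          = ∑ x : Layer n, layerMixDensity n (p j) x := by
            refine Finset.sum_congr rfl fun x _ => ?_
            rw [if_neg hjk, one_mul]
        _ = 1 := hone j
  rw [Finset.prod_congr rfl fun j _ => hj j,
    Finset.prod_ite_eq' Finset.univ k
      (fun _ => ∑ x : Layer n, if A x then layerMixDensity n (p k) x else 0)]
  simp

lemma integral_avg {m : ℕ} (hm : 0 < m) (p : Fin m → Measure (ℕ × ℝ)) (F : ℕ × ℝ → ℝ)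
    (hint : ∀ k, Integrable F (p k)) :
    ∫ ty, F ty ∂(avgMeasure p) = (m : ℝ)⁻¹ * ∑ k, ∫ ty, F ty ∂(p k) := by
  rw [avgMeasure, MeasureTheory.integral_smul_measure,
    MeasureTheory.integral_finset_sum_measure (fun k _ => hint k),
    smul_eq_mul, ENNReal.toReal_inv, ENNReal.toReal_natCast]

end SubgraphAux

/-- **Lemma (subgraph densities for a random layer).**
Let `F` be a graph with `r` vertices and `s` edges contained among the `n` nodes, and
let `i ∈ V(F)` have degree `r - 1` in `F`. If `k*` is a uniformly random layer index,
then (i) `P(G_{k*} ⊇ F) = m⁻¹ μ_{rs}`, and (ii) conditionally on `G_{k*} ⊇ F`, the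
degree of `i` in `G_{k*}` equals `t` with probability `Bin_{rs}(P_n)(t - r + 1)`
(stated in product form, which also covers the degenerate case). -/
theorem subgraph_densities
    (n m : ℕ) (hm : 0 < m) (p : Fin m → Measure (ℕ × ℝ))
    (hvalid : ∀ k, ValidTypes n (p k))
    (r s : ℕ) (VF : Finset (Fin n)) (EF : Finset (Sym2 (Fin n)))
    (hVF : VF.card = r) (hEF : EF.card = s) (hEsub : EF ⊆ pairsIn VF)
    (i : Fin n) (hi : i ∈ VF) (hideg : degreeOf EF i = r - 1) :
    ((m : ℝ)⁻¹ * ∑ k : Fin m,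
        modelProb n m p (fun g => VF ⊆ (g k).1 ∧ EF ⊆ (g k).2) =
      (m : ℝ)⁻¹ * muRS n p r s) ∧
    ∀ t : ℕ,
      (m : ℝ)⁻¹ * ∑ k : Fin m,
          modelProb n m p (fun g => degreeOf (g k).2 i = t ∧ VF ⊆ (g k).1 ∧ EF ⊆ (g k).2) =
        zext (binMix (avgMeasure p) r s) ((t : ℤ) - r + 1) *
          ((m : ℝ)⁻¹ * ∑ k : Fin m,
            modelProb n m p (fun g => VF ⊆ (g k).1 ∧ EF ⊆ (g k).2)) := by
  classical
  have hone : ∀ j, ∑ g : Layer n, layerMixDensity n (p j) g = 1 :=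
    fun j => SubgraphAux.layerMix_total (hvalid j)
  have hr1 : 1 ≤ r := hVF ▸ Finset.card_pos.mpr ⟨i, hi⟩
  have hrn : r ≤ n := by
    rw [← hVF]
    simpa using Finset.card_le_univ VF
  set D : ℝ := (n.descFactorial r : ℝ) with hD
  have hDpos : (0:ℝ) < D := by
    rw [hD]
    exact_mod_cast Nat.pos_of_ne_zero fun h =>
      absurd (Nat.descFactorial_eq_zero_iff_lt.mp h) (by omega)
  have hDne : D ≠ 0 := hDpos.ne'
  set Mk : Fin m → ℝ := fun k => ∫ ty, (ty.1.descFactorial r : ℝ) * ty.2 ^ s ∂(p k) with hMk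
  have hPA : ∀ k, modelProb n m p (fun g => VF ⊆ (g k).1 ∧ EF ⊆ (g k).2) = Mk k / D := by
    intro k
    refine (SubgraphAux.modelProb_layer p hone k fun x : Layer n =>
      VF ⊆ x.1 ∧ EF ⊆ x.2).trans ?_
    refine Eq.trans ?_ (SubgraphAux.layerMix_A (hvalid k) hEsub hVF hEF)
    exact Finset.sum_congr rfl fun x _ => by
      by_cases h : VF ⊆ x.1 ∧ EF ⊆ x.2 <;> simp [h]
  have hsumA : ∑ k, modelProb n m p (fun g => VF ⊆ (g k).1 ∧ EF ⊆ (g k).2)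
      = muRS n p r s := by
    rw [Finset.sum_congr rfl fun k _ => hPA k]
    unfold muRS pRS
    rfl
  refine ⟨by rw [hsumA], ?_⟩
  intro t
  rw [hsumA]
  by_cases hrt : r ≤ t + 1
  · -- non-degenerate case
    obtain ⟨u, rfl⟩ : ∃ u, t = (r - 1) + u := ⟨t + 1 - r, by omega⟩
    set Nk : Fin m → ℝ := fun k =>
      ∫ ty, binPdf (ty.1 - r) ty.2 u * (ty.1.descFactorial r : ℝ) * ty.2 ^ s ∂(p k) with hNk
    have hPB : ∀ k, modelProb n m p
        (fun g => degreeOf (g k).2 i = (r - 1) + u ∧ VF ⊆ (g k).1 ∧ EF ⊆ (g k).2)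
        = Nk k / D := by
      intro k
      refine (SubgraphAux.modelProb_layer p hone k fun x : Layer n =>
        degreeOf x.2 i = (r - 1) + u ∧ VF ⊆ x.1 ∧ EF ⊆ x.2).trans ?_
      refine Eq.trans ?_ (SubgraphAux.layerMix_B (hvalid k) hEsub hVF hEF hi hideg u)
      exact Finset.sum_congr rfl fun x _ => by
        by_cases h : degreeOf x.2 i = (r - 1) + u ∧ VF ⊆ x.1 ∧ EF ⊆ x.2 <;> simp [h]
    rw [Finset.sum_congr rfl fun k _ => hPB k]
    -- identify the zext factor
    have hzx : zext (binMix (avgMeasure p) r s) ((((r - 1) + u : ℕ) : ℤ) - r + 1)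
        = binMix (avgMeasure p) r s u := by
      simp only [zext]
      rw [if_pos (by omega)]
      congr 1
      omega
    rw [hzx]
    -- express binMix via the layer integrals
    have hnum : (∫ ty, binPdf (ty.1 - r) ty.2 u * (ty.1.descFactorial r : ℝ) * ty.2 ^ s
        ∂(avgMeasure p)) = (m : ℝ)⁻¹ * ∑ k, Nk k :=
      SubgraphAux.integral_avg hm p _ fun k => SubgraphAux.integrable_binPdf_desc (hvalid k) r s u
    have hcm : crossMoment (avgMeasure p) r s = (m : ℝ)⁻¹ * ∑ k, Mk k := by
      unfold crossMoment
      exact SubgraphAux.integral_avg hm p _ fun k => SubgraphAux.integrable_desc (hvalid k) r s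
    have hbm : binMix (avgMeasure p) r s u
        = ((m : ℝ)⁻¹ * ∑ k, Nk k) / ((m : ℝ)⁻¹ * ∑ k, Mk k) := by
      unfold binMix
      rw [hnum, hcm]
    rw [hbm]
    -- algebra
    have hmuRS : muRS n p r s = (∑ k, Mk k) / D := by
      unfold muRS pRS
      rw [← Finset.sum_div]
    rw [hmuRS, ← Finset.sum_div]
    have hcne : ((m : ℝ))⁻¹ ≠ 0 := by
      have : (0:ℝ) < m := by exact_mod_cast hm
      positivity
    by_cases hM : (∑ k, Mk k) = 0
    · -- degenerate: all cross moments vanish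
      have hMk0 : ∀ k, Mk k = 0 := by
        have hnn : ∀ k : Fin m, (0:ℝ) ≤ Mk k := by
          intro k
          apply MeasureTheory.integral_nonneg_of_ae
          filter_upwards [SubgraphAux.ae_valid (hvalid k)] with ty hty
          have h2 : (0:ℝ) ≤ ty.2 := hty.2.1
          show (0:ℝ) ≤ (ty.1.descFactorial r : ℝ) * ty.2 ^ s
          positivity
        intro k
        have := (Finset.sum_eq_zero_iff_of_nonneg fun k _ => hnn k).mp hM
        exact this k (Finset.mem_univ k)
      have hNk0 : ∀ k, Nk k = 0 := by
        intro k
        have hnn : (0 : ℕ × ℝ → ℝ) ≤ᵐ[p k]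
            fun ty : ℕ × ℝ => (ty.1.descFactorial r : ℝ) * ty.2 ^ s := by
          filter_upwards [SubgraphAux.ae_valid (hvalid k)] with ty hty
          have h2 : (0:ℝ) ≤ ty.2 := hty.2.1
          show (0:ℝ) ≤ (ty.1.descFactorial r : ℝ) * ty.2 ^ s
          positivity
        have h0 : (fun ty : ℕ × ℝ => (ty.1.descFactorial r : ℝ) * ty.2 ^ s) =ᵐ[p k] 0 :=
          (MeasureTheory.integral_eq_zero_iff_of_nonneg_ae hnn
            (SubgraphAux.integrable_desc (hvalid k) r s)).mp (hMk0 k)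
        have h1 : (fun ty : ℕ × ℝ =>
            binPdf (ty.1 - r) ty.2 u * (ty.1.descFactorial r : ℝ) * ty.2 ^ s) =ᵐ[p k] 0 := by
          filter_upwards [h0] with ty hty
          have hty' : (ty.1.descFactorial r : ℝ) * ty.2 ^ s = 0 := hty
          show binPdf (ty.1 - r) ty.2 u * (ty.1.descFactorial r : ℝ) * ty.2 ^ s = 0
          rw [mul_assoc, hty', mul_zero]
        exact MeasureTheory.integral_eq_zero_of_ae h1
      have hN0 : (∑ k, Nk k) = 0 := Finset.sum_eq_zero fun k _ => hNk0 k
      rw [hM, hN0]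
      simp
    · have hcM : (m : ℝ)⁻¹ * ∑ k, Mk k ≠ 0 := mul_ne_zero hcne hM
      field_simp
  · -- degenerate case t + 1 < r
    have hL : ∀ k, modelProb n m p
        (fun g => degreeOf (g k).2 i = t ∧ VF ⊆ (g k).1 ∧ EF ⊆ (g k).2) = 0 := by
      intro k
      unfold modelProb
      apply Finset.sum_eq_zero
      intro g _
      rw [if_neg]
      rintro ⟨hdeg, -, hEg⟩
      have hmono := SubgraphAux.degreeOf_mono hEg i
      omega
    rw [Finset.sum_congr rfl fun k _ => hL k, Finset.sum_const_zero, mul_zero]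
    have hz : ¬ ((0:ℤ) ≤ (t : ℤ) - r + 1) := by omega
    simp only [zext]
    rw [if_neg hz, zero_mul]

end
end

section
/- For each n, let (X^{(n)}_1,Y^{(n)}_1),…,(X^{(n)}_{m_n},Y^{(n)}_{m_n}) be random variables with values in {0,…,n} × [0,1], with averaged distribution P_n(A) = (1/m_n)∑_{k=1}^{m_n} P((X^{(n)}_k,Y^{(n)}_k) ∈ A). Fix integers r,s ≥ 0. If P_n → P weakly and (P_n)_rs → (P)_rs < ∞ as n → ∞, then the cross moments satisfy μ^{(n)}_{10,rs} = o(m_n (n)_r^{−1}) and (P_n)_{10,rs} = o(n), where μ^{(n)}_{10,rs} = ∑_{k=1}^{m_n} (E[X^{(n)}_k]/n)·(E[(X^{(n)}_k)_r (Y^{(n)}_k)^s]/(n)_r) and (P_n)_{10,rs} = ∫ x·(x)_r y^s P_n(dx,dy). -/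
open MeasureTheory Filter
open scoped ENNReal Topology

noncomputable section

/-!
Write `W(x, y) = (x)_r y^s` and split `W` into its head `W · 1{x ≤ K}` and tail
`W · 1{x > K}`. All the measures live on `ℕ × [0, 1]` (for the limit `P` because `[0, 1]` is
closed), where the head is continuous and bounded; so its `P_n`-integral converges to its
`P`-integral, and together with `(P_n)_rs → (P)_rs` the tail integrals under `P_n` converge to
the tail integral under `P`, which is small for large `K` because `W` is `P`-integrable.
On `{x ≤ n}` we have `x W ≤ K W + n W 1{x > K}`, which gives `(P_n)_{10,rs} = o(n)`.
For `μ_{10,rs}`, bounding the head by a constant `C_K` gives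
`E[X_k] E[W_k] ≤ C_K E[X_k] + n E[W_k 1{X_k > K}]`, which reduces the claim to
`∫ x dP_n = o(n)`, the case `r = s = 0` of the previous bound.
-/
open Set

lemma tendsto_zero_of_forall_eventually_le_add {ι : Type*} {l : Filter ι} {a : ι → ℝ}
    (ha : ∀ i, 0 ≤ a i)
    (h : ∀ ε > 0, ∃ b : ι → ℝ, Tendsto b l (𝓝 0) ∧ ∀ᶠ i in l, a i ≤ b i + ε) :
    Tendsto a l (𝓝 0) := by
  refine tendsto_order.2 ⟨fun c hc => Eventually.of_forall fun i => hc.trans_le (ha i),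
    fun c hc => ?_⟩
  obtain ⟨b, hb, hab⟩ := h (c / 2) (half_pos hc)
  filter_upwards [hab, hb.eventually (gt_mem_nhds (half_pos hc))] with i hab hb
  linarith

lemma isCompact_Iic_prod_Icc (n : ℕ) : IsCompact (Iic n ×ˢ Icc (0 : ℝ) 1) :=
  (finite_Iic n).isCompact.prod isCompact_Icc

lemma isClopen_fst_preimage {β : Type*} [TopologicalSpace β] (s : Set ℕ) :
    IsClopen (Prod.fst ⁻¹' s : Set (ℕ × β)) :=
  (isClopen_discrete s).preimage continuous_fst

lemma continuous_natCast_fst {β : Type*} [TopologicalSpace β] :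
    Continuous fun z : ℕ × β => (z.1 : ℝ) :=
  continuous_of_discreteTopology.comp continuous_fst

lemma tendsto_setIntegral_fst_gt_atTop {β E : Type*} [MeasurableSpace β]
    [NormedAddCommGroup E] [NormedSpace ℝ E] {μ : Measure (ℕ × β)} {f : ℕ × β → E}
    (hf : Integrable f μ) :
    Tendsto (fun K : ℕ => ∫ z in Prod.fst ⁻¹' Ioi K, f z ∂μ) atTop (𝓝 0) := by
  have hempty : ⋂ K : ℕ, (Prod.fst ⁻¹' Ioi K : Set (ℕ × β)) = ∅ :=
    eq_empty_of_forall_notMem fun z hz => lt_irrefl z.1 (mem_iInter.1 hz z.1)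
  simpa [hempty] using tendsto_setIntegral_of_antitone
    (fun K => measurable_fst measurableSet_Ioi)
    (fun K L hKL => preimage_mono (Ioi_subset_Ioi hKL)) ⟨0, hf.integrableOn⟩

lemma setIntegral_fst_gt_eq_sub {β E : Type*} [MeasurableSpace β]
    [NormedAddCommGroup E] [NormedSpace ℝ E] {μ : Measure (ℕ × β)} {f : ℕ × β → E}
    (hf : Integrable f μ) (K : ℕ) :
    ∫ z in Prod.fst ⁻¹' Ioi K, f z ∂μ =
      ∫ z, f z ∂μ - ∫ z, (Prod.fst ⁻¹' Iic K).indicator f z ∂μ := by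
  rw [integral_indicator (measurable_fst measurableSet_Iic), ← compl_Ioi, preimage_compl]
  exact eq_sub_of_add_eq (integral_add_compl (measurable_fst measurableSet_Ioi) hf)

section AvgMeasure

variable {m : ℕ} {p : Fin m → Measure (ℕ × ℝ)}

lemma integral_avgMeasure {f : ℕ × ℝ → ℝ} (hf : ∀ k, Integrable f (p k)) :
    ∫ z, f z ∂avgMeasure p = (m : ℝ)⁻¹ * ∑ k, ∫ z, f z ∂p k := by
  rw [avgMeasure, integral_smul_measure, integral_finsetSum_measure fun k _ => hf k]
  simp

lemma setIntegral_avgMeasure {f : ℕ × ℝ → ℝ} {s : Set (ℕ × ℝ)} (hs : MeasurableSet s)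
    (hf : ∀ k, Integrable f (p k)) :
    ∫ z in s, f z ∂avgMeasure p = (m : ℝ)⁻¹ * ∑ k, ∫ z in s, f z ∂p k := by
  simp_rw [← integral_indicator hs]
  exact integral_avgMeasure fun k => (hf k).indicator hs

lemma validTypes_avgMeasure {n : ℕ} (hm : 0 < m) (hp : ∀ k, ValidTypes n (p k)) :
    ValidTypes n (avgMeasure p) := by
  refine ⟨⟨?_⟩, ?_⟩ <;>
    simp only [avgMeasure, Measure.smul_apply, smul_eq_mul, Measure.finsetSum_apply]
  · simp [fun k => (hp k).1.measure_univ, ENNReal.inv_mul_cancel, hm.ne']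
  · simp [fun k => (hp k).2]

end AvgMeasure

namespace ValidTypes

variable {n : ℕ} {μ : Measure (ℕ × ℝ)} {f : ℕ × ℝ → ℝ}

lemma ae_mem (h : ValidTypes n μ) : ∀ᵐ z ∂μ, z ∈ Iic n ×ˢ Icc (0 : ℝ) 1 :=
  mem_ae_iff.2 h.2

lemma integrable (h : ValidTypes n μ) (hf : Continuous f) : Integrable f μ := by
  have := h.1
  obtain ⟨C, hC⟩ := (isCompact_Iic_prod_Icc n).exists_bound_of_continuousOn hf.continuousOn
  exact (integrable_const C).mono' hf.aestronglyMeasurable (h.ae_mem.mono hC)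

lemma integral_fst_le (h : ValidTypes n μ) : ∫ z, (z.1 : ℝ) ∂μ ≤ n := by
  have := h.1
  calc ∫ z, (z.1 : ℝ) ∂μ ≤ ∫ _, (n : ℝ) ∂μ :=
        integral_mono_ae (h.integrable continuous_natCast_fst) (integrable_const _)
          (h.ae_mem.mono fun z hz => Nat.cast_le.2 hz.1)
    _ = n := by simp

lemma setIntegral_fst_gt_nonneg (h : ValidTypes n μ) (hf0 : ∀ z : ℕ × ℝ, 0 ≤ z.2 → 0 ≤ f z)
    (K : ℕ) : 0 ≤ ∫ z in Prod.fst ⁻¹' Ioi K, f z ∂μ :=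
  setIntegral_nonneg_of_ae (h.ae_mem.mono fun z hz => hf0 z hz.2.1)

lemma integral_fst_mul_le (h : ValidTypes n μ) (hf : Continuous f)
    (hf0 : ∀ z : ℕ × ℝ, 0 ≤ z.2 → 0 ≤ f z) (K : ℕ) :
    ∫ z, (z.1 : ℝ) * f z ∂μ ≤ K * ∫ z, f z ∂μ + n * ∫ z in Prod.fst ⁻¹' Ioi K, f z ∂μ := by
  have hT := (isClopen_fst_preimage (β := ℝ) (Ioi K)).continuous_indicator hf
  have hKf := (h.integrable hf).const_mul (K : ℝ)
  have hnT := (h.integrable hT).const_mul (n : ℝ)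
  calc ∫ z, (z.1 : ℝ) * f z ∂μ
      ≤ ∫ z, (K * f z + n * (Prod.fst ⁻¹' Ioi K).indicator f z) ∂μ := by
        refine integral_mono_ae (h.integrable (continuous_natCast_fst.mul hf))
          (hKf.add hnT) ?_
        filter_upwards [h.ae_mem] with z hz
        obtain ⟨hzn, hy, -⟩ := hz
        have hfz := hf0 z hy
        by_cases hK : K < z.1
        · have : (z.1 : ℝ) ≤ n := Nat.cast_le.2 hzn
          simp only [indicator_of_mem (show z ∈ Prod.fst ⁻¹' Ioi K from hK)]
          nlinarith [(K.cast_nonneg : (0 : ℝ) ≤ K)]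
        · have : (z.1 : ℝ) ≤ K := Nat.cast_le.2 (not_lt.1 hK)
          simp only [indicator_of_notMem (show z ∉ Prod.fst ⁻¹' Ioi K from hK), mul_zero,
            add_zero]
          exact mul_le_mul_of_nonneg_right this hfz
    _ = K * ∫ z, f z ∂μ + n * ∫ z in Prod.fst ⁻¹' Ioi K, f z ∂μ := by
        rw [integral_add hKf hnT, integral_const_mul, integral_const_mul,
          integral_indicator (measurable_fst measurableSet_Ioi)]

lemma integral_le_add_setIntegral_fst_gt (h : ValidTypes n μ) (hf : Continuous f) {K : ℕ}
    {C : ℝ} (hC : ∀ z ∈ Iic K ×ˢ Icc (0 : ℝ) 1, ‖f z‖ ≤ C) :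
    ∫ z, f z ∂μ ≤ C + ∫ z in Prod.fst ⁻¹' Ioi K, f z ∂μ := by
  have := h.1
  have hC0 : 0 ≤ C := (norm_nonneg _).trans (hC (0, 0) ⟨K.zero_le, le_rfl, zero_le_one⟩)
  have hT := (isClopen_fst_preimage (β := ℝ) (Ioi K)).continuous_indicator hf
  rw [← integral_indicator (measurable_fst measurableSet_Ioi)]
  calc ∫ z, f z ∂μ ≤ ∫ z, (C + (Prod.fst ⁻¹' Ioi K).indicator f z) ∂μ := by
        refine integral_mono_ae (h.integrable hf)
          ((integrable_const C).add (h.integrable hT)) ?_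
        filter_upwards [h.ae_mem] with z hz
        by_cases hK : K < z.1
        · simp [indicator_of_mem (show z ∈ Prod.fst ⁻¹' Ioi K from hK), hC0]
        · simp only [indicator_of_notMem (show z ∉ Prod.fst ⁻¹' Ioi K from hK), add_zero]
          exact (Real.le_norm_self _).trans (hC z ⟨not_lt.1 hK, hz.2⟩)
    _ = C + ∫ z, (Prod.fst ⁻¹' Ioi K).indicator f z ∂μ := by
        rw [integral_add (integrable_const C) (h.integrable hT)]
        simp

lemma integral_fst_mul_integral_le (h : ValidTypes n μ) (hf : Continuous f)
    (hf0 : ∀ z : ℕ × ℝ, 0 ≤ z.2 → 0 ≤ f z) {K : ℕ} {C : ℝ}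
    (hC : ∀ z ∈ Iic K ×ˢ Icc (0 : ℝ) 1, ‖f z‖ ≤ C) :
    (∫ z, (z.1 : ℝ) ∂μ) * ∫ z, f z ∂μ ≤
      C * ∫ z, (z.1 : ℝ) ∂μ + n * ∫ z in Prod.fst ⁻¹' Ioi K, f z ∂μ := by
  have hA0 : 0 ≤ ∫ z, (z.1 : ℝ) ∂μ := integral_nonneg fun z => z.1.cast_nonneg
  have hT0 := h.setIntegral_fst_gt_nonneg hf0 K
  calc (∫ z, (z.1 : ℝ) ∂μ) * ∫ z, f z ∂μ
      ≤ (∫ z, (z.1 : ℝ) ∂μ) * (C + ∫ z in Prod.fst ⁻¹' Ioi K, f z ∂μ) :=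
        mul_le_mul_of_nonneg_left (h.integral_le_add_setIntegral_fst_gt hf hC) hA0
    _ ≤ C * ∫ z, (z.1 : ℝ) ∂μ + n * ∫ z in Prod.fst ⁻¹' Ioi K, f z ∂μ := by
        rw [mul_add, mul_comm]
        gcongr
        exact h.integral_fst_le

end ValidTypes

namespace WeakConvNR

variable {Q : ℕ → Measure (ℕ × ℝ)} {P : Measure (ℕ × ℝ)}

lemma ae_mem [IsFiniteMeasure P] (hweak : WeakConvNR Q P) {F : Set (ℕ × ℝ)} (hF : IsClosed F)
    (hne : F.Nonempty) (hQ : ∀ n, ∀ᵐ z ∂Q n, z ∈ F) : ∀ᵐ z ∂P, z ∈ F := by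
  set ψ : ℕ × ℝ → ℝ := fun z => min (Metric.infDist z F) 1
  have hψ : Continuous ψ := (Metric.continuous_infDist_pt F).min continuous_const
  have hψ0 : ∀ z, 0 ≤ ψ z := fun z => le_min Metric.infDist_nonneg zero_le_one
  have hψ1 : ∀ z, |ψ z| ≤ 1 := fun z => by
    rw [abs_of_nonneg (hψ0 z)]; exact min_le_right _ _
  have hQψ : ∀ n, ∫ z, ψ z ∂Q n = 0 := fun n => integral_eq_zero_of_ae <|
    (hQ n).mono fun z hz => by simp [ψ, Metric.infDist_zero_of_mem hz]
  have hPψ : ∫ z, ψ z ∂P = 0 :=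
    tendsto_nhds_unique (hweak ψ hψ ⟨1, hψ1⟩) (by simp [hQψ])
  have hint : Integrable ψ P := (integrable_const (1 : ℝ)).mono' hψ.aestronglyMeasurable
    (ae_of_all _ hψ1)
  filter_upwards [(integral_eq_zero_iff_of_nonneg hψ0 hint).1 hPψ] with z hz
  rw [hF.mem_iff_infDist_zero hne]
  exact le_antisymm ((min_le_iff.1 hz.le).resolve_right one_pos.not_ge) Metric.infDist_nonneg

lemma tendsto_integral_of_bounded_of_snd_mem_Icc (hweak : WeakConvNR Q P)
    (hQ : ∀ n, ∀ᵐ z ∂Q n, z.2 ∈ Icc (0 : ℝ) 1) (hP : ∀ᵐ z ∂P, z.2 ∈ Icc (0 : ℝ) 1)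
    {φ : ℕ × ℝ → ℝ} (hφ : Continuous φ) {C : ℝ}
    (hC : ∀ z : ℕ × ℝ, z.2 ∈ Icc (0 : ℝ) 1 → |φ z| ≤ C) :
    Tendsto (fun n => ∫ z, φ z ∂Q n) atTop (𝓝 (∫ z, φ z ∂P)) := by
  -- `φ` itself may be unbounded; clamping `y` to `[0, 1]` makes it a valid test function
  -- without changing any of the integrals.
  set clamp : ℕ × ℝ → ℕ × ℝ := fun z => (z.1, projIcc 0 1 zero_le_one z.2)
  have hclamp : ∀ μ : Measure (ℕ × ℝ), (∀ᵐ z ∂μ, z.2 ∈ Icc (0 : ℝ) 1) →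
      ∫ z, φ (clamp z) ∂μ = ∫ z, φ z ∂μ := fun μ hμ =>
    integral_congr_ae <| hμ.mono fun z hz => by simp [clamp, projIcc_of_mem _ hz]
  have h := hweak (φ ∘ clamp)
    (hφ.comp (continuous_fst.prodMk (continuous_projIcc.comp continuous_snd).subtype_val))
    ⟨C, fun z => hC _ (projIcc 0 1 zero_le_one z.2).2⟩
  simp only [Function.comp_def, hclamp P hP, fun n => hclamp (Q n) (hQ n)] at h
  exact h

end WeakConvNR

section Tails

variable {Q : ℕ → Measure (ℕ × ℝ)} {P : Measure (ℕ × ℝ)} [IsFiniteMeasure P]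
  {f : ℕ × ℝ → ℝ}

lemma WeakConvNR.tendsto_setIntegral_fst_gt (hweak : WeakConvNR Q P)
    (hQ : ∀ n, ValidTypes n (Q n)) (hf : Continuous f) (hfP : Integrable f P)
    (hmom : Tendsto (fun n => ∫ z, f z ∂Q n) atTop (𝓝 (∫ z, f z ∂P))) (K : ℕ) :
    Tendsto (fun n => ∫ z in Prod.fst ⁻¹' Ioi K, f z ∂Q n) atTop
      (𝓝 (∫ z in Prod.fst ⁻¹' Ioi K, f z ∂P)) := by
  have hQy : ∀ n, ∀ᵐ z ∂Q n, z.2 ∈ Icc (0 : ℝ) 1 := fun n => (hQ n).ae_mem.mono fun z hz => hz.2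
  have hPy : ∀ᵐ z ∂P, z.2 ∈ Icc (0 : ℝ) 1 :=
    hweak.ae_mem (isClosed_Icc.preimage continuous_snd) ⟨(0, 0), left_mem_Icc.2 zero_le_one⟩ hQy
  obtain ⟨C, hC⟩ := (isCompact_Iic_prod_Icc K).exists_bound_of_continuousOn hf.continuousOn
  have hC0 : 0 ≤ C := (norm_nonneg _).trans (hC (0, 0) ⟨K.zero_le, le_rfl, zero_le_one⟩)
  have hhead := hweak.tendsto_integral_of_bounded_of_snd_mem_Icc hQy hPy
    ((isClopen_fst_preimage (Iic K)).continuous_indicator hf) (C := C) fun z hz => by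
      by_cases hK : z.1 ≤ K
      · simpa [indicator_of_mem (show z ∈ Prod.fst ⁻¹' Iic K from hK)] using hC z ⟨hK, hz⟩
      · simpa [indicator_of_notMem (show z ∉ Prod.fst ⁻¹' Iic K from hK)] using hC0
  rw [setIntegral_fst_gt_eq_sub hfP]
  exact (hmom.sub hhead).congr fun n => (setIntegral_fst_gt_eq_sub ((hQ n).integrable hf) K).symm

lemma WeakConvNR.exists_eventually_setIntegral_fst_gt_lt (hweak : WeakConvNR Q P)
    (hQ : ∀ n, ValidTypes n (Q n)) (hf : Continuous f) (hfP : Integrable f P)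
    (hmom : Tendsto (fun n => ∫ z, f z ∂Q n) atTop (𝓝 (∫ z, f z ∂P))) {ε : ℝ} (hε : 0 < ε) :
    ∃ K : ℕ, ∀ᶠ n in atTop, ∫ z in Prod.fst ⁻¹' Ioi K, f z ∂Q n < ε := by
  obtain ⟨K, hK⟩ := ((tendsto_setIntegral_fst_gt_atTop hfP).eventually_lt_const hε).exists
  exact ⟨K, (hweak.tendsto_setIntegral_fst_gt hQ hf hfP hmom K).eventually_lt_const hK⟩

theorem tendsto_integral_fst_mul_div_atTop (hweak : WeakConvNR Q P)
    (hQ : ∀ n, ValidTypes n (Q n)) (hf : Continuous f) (hf0 : ∀ z : ℕ × ℝ, 0 ≤ z.2 → 0 ≤ f z)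
    (hfP : Integrable f P) (hmom : Tendsto (fun n => ∫ z, f z ∂Q n) atTop (𝓝 (∫ z, f z ∂P))) :
    Tendsto (fun n : ℕ => (∫ z, (z.1 : ℝ) * f z ∂Q n) / n) atTop (𝓝 0) := by
  refine tendsto_zero_of_forall_eventually_le_add (fun n => div_nonneg (integral_nonneg_of_ae
    ((hQ n).ae_mem.mono fun z hz => mul_nonneg z.1.cast_nonneg (hf0 z hz.2.1))) n.cast_nonneg)
    fun ε hε => ?_
  obtain ⟨K, hK⟩ := hweak.exists_eventually_setIntegral_fst_gt_lt hQ hf hfP hmom hε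
  refine ⟨fun n => K * (∫ z, f z ∂Q n) / n,
    (hmom.const_mul _).div_atTop tendsto_natCast_atTop_atTop, ?_⟩
  filter_upwards [hK, eventually_gt_atTop 0] with n hn hn0
  have hn0' : (0 : ℝ) < n := Nat.cast_pos.2 hn0
  rw [div_add' _ _ _ hn0'.ne', div_le_div_iff_of_pos_right hn0']
  linarith [(hQ n).integral_fst_mul_le hf hf0 K, mul_lt_mul_of_pos_left hn hn0']

end Tails

theorem tendsto_sum_integral_fst_mul_integral_div {P : Measure (ℕ × ℝ)} [IsProbabilityMeasure P]
    {f : ℕ × ℝ → ℝ} {m : ℕ → ℕ} (hm : ∀ n, 0 < m n) {p : ∀ n, Fin (m n) → Measure (ℕ × ℝ)}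
    (hp : ∀ n k, ValidTypes n (p n k)) (hweak : WeakConvNR (fun n => avgMeasure (p n)) P)
    (hf : Continuous f) (hf0 : ∀ z : ℕ × ℝ, 0 ≤ z.2 → 0 ≤ f z) (hfP : Integrable f P)
    (hmom : Tendsto (fun n => ∫ z, f z ∂avgMeasure (p n)) atTop (𝓝 (∫ z, f z ∂P))) :
    Tendsto (fun n : ℕ => (∑ k, (∫ z, (z.1 : ℝ) ∂p n k) * ∫ z, f z ∂p n k) / (n * m n))
      atTop (𝓝 0) := by
  have hQ : ∀ n, ValidTypes n (avgMeasure (p n)) := fun n => validTypes_avgMeasure (hm n) (hp n)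
  have hmean : Tendsto (fun n : ℕ => (∫ z, (z.1 : ℝ) ∂avgMeasure (p n)) / n) atTop (𝓝 0) := by
    simpa using tendsto_integral_fst_mul_div_atTop hweak hQ continuous_const
      (fun _ _ => zero_le_one) (integrable_const 1)
      (by simp [measureReal_def, (hQ _).1.measure_univ])
  refine tendsto_zero_of_forall_eventually_le_add (fun n => div_nonneg (Finset.sum_nonneg
    fun k _ => mul_nonneg (integral_nonneg fun z => z.1.cast_nonneg) (integral_nonneg_of_ae
      ((hp n k).ae_mem.mono fun z hz => hf0 z hz.2.1))) (by positivity)) fun ε hε => ?_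
  obtain ⟨K, hK⟩ := hweak.exists_eventually_setIntegral_fst_gt_lt hQ hf hfP hmom hε
  obtain ⟨C, hC⟩ := (isCompact_Iic_prod_Icc K).exists_bound_of_continuousOn hf.continuousOn
  refine ⟨fun n => C * ((∫ z, (z.1 : ℝ) ∂avgMeasure (p n)) / n), by simpa using hmean.const_mul C,
    ?_⟩
  filter_upwards [hK, eventually_gt_atTop 0] with n hn hn0
  have hn0' : (0 : ℝ) < n := Nat.cast_pos.2 hn0
  have hm0 : (0 : ℝ) < m n := Nat.cast_pos.2 (hm n)
  have hsum := Finset.sum_le_sum fun k (_ : k ∈ Finset.univ) =>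
    (hp n k).integral_fst_mul_integral_le hf hf0 hC
  rw [Finset.sum_add_distrib, ← Finset.mul_sum, ← Finset.mul_sum] at hsum
  rw [setIntegral_avgMeasure (measurable_fst measurableSet_Ioi) fun k => (hp n k).integrable hf]
    at hn
  rw [integral_avgMeasure fun k => (hp n k).integrable continuous_natCast_fst]
  calc (∑ k, (∫ z, (z.1 : ℝ) ∂p n k) * ∫ z, f z ∂p n k) / (n * m n)
      ≤ (C * ∑ k, ∫ z, (z.1 : ℝ) ∂p n k + n * ∑ k, ∫ z in Prod.fst ⁻¹' Ioi K, f z ∂p n k) /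
          (n * m n) := by gcongr
    _ = C * (((m n : ℝ)⁻¹ * ∑ k, ∫ z, (z.1 : ℝ) ∂p n k) / n) +
          (m n : ℝ)⁻¹ * ∑ k, ∫ z in Prod.fst ⁻¹' Ioi K, f z ∂p n k := by
        field_simp
    _ ≤ C * (((m n : ℝ)⁻¹ * ∑ k, ∫ z, (z.1 : ℝ) ∂p n k) / n) + ε := by gcongr

/-- **Lemma (cross moments are negligible).**
If `P_n → P` weakly and `(P_n)_{rs} → (P)_{rs} < ∞`, then
`μ⁽ⁿ⁾_{10,rs} = o(m_n (n)_r⁻¹)` and `(P_n)_{10,rs} = o(n)`, where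
`μ⁽ⁿ⁾_{10,rs} = ∑ₖ (E[Xₖ]/n) (E[(Xₖ)_r Yₖ^s]/(n)_r)` and
`(P_n)_{10,rs} = ∫ x (x)_r y^s dP_n`. -/
theorem cross_moment_negligible
    (m : ℕ → ℕ) (hm : ∀ n, 0 < m n)
    (p : ∀ n, Fin (m n) → Measure (ℕ × ℝ))
    (hvalid : ∀ n k, ValidTypes n (p n k))
    (r s : ℕ) (P : Measure (ℕ × ℝ)) (hP : IsProbabilityMeasure P)
    (hweak : WeakConvNR (fun n => avgMeasure (p n)) P)
    (hint : Integrable (fun ty : ℕ × ℝ => (ty.1.descFactorial r : ℝ) * ty.2 ^ s) P)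
    (hmom : Tendsto (fun n => crossMoment (avgMeasure (p n)) r s) atTop
      (𝓝 (crossMoment P r s))) :
    Tendsto
        (fun n =>
          (∑ k : Fin (m n),
              ((∫ ty, (ty.1 : ℝ) ∂(p n k)) / (n : ℝ)) *
                ((∫ ty, (ty.1.descFactorial r : ℝ) * ty.2 ^ s ∂(p n k)) /
                  (n.descFactorial r : ℝ))) /
            ((m n : ℝ) / (n.descFactorial r : ℝ)))
        atTop (𝓝 0) ∧
      Tendsto
        (fun n =>
          (∫ ty, (ty.1 : ℝ) * (ty.1.descFactorial r : ℝ) * ty.2 ^ s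
              ∂(avgMeasure (p n))) / (n : ℝ))
        atTop (𝓝 0) := by
  have hf : Continuous fun z : ℕ × ℝ => (z.1.descFactorial r : ℝ) * z.2 ^ s :=
    ((continuous_of_discreteTopology (f := fun x : ℕ => (x.descFactorial r : ℝ))).comp
      continuous_fst).mul (continuous_snd.pow s)
  have hf0 : ∀ z : ℕ × ℝ, 0 ≤ z.2 → 0 ≤ (z.1.descFactorial r : ℝ) * z.2 ^ s :=
    fun z hz => by positivity
  constructor
  · refine (tendsto_sum_integral_fst_mul_integral_div hm hvalid hweak hf hf0 hint hmom).congr' ?_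
    filter_upwards [eventually_ge_atTop r] with n hn
    have hd : (n.descFactorial r : ℝ) ≠ 0 :=
      Nat.cast_ne_zero.2 (Nat.descFactorial_eq_zero_iff_lt.not.2 (not_lt.2 hn))
    rw [Finset.sum_div, Finset.sum_div]
    refine Finset.sum_congr rfl fun k _ => ?_
    field_simp
  · simpa only [mul_assoc] using tendsto_integral_fst_mul_div_atTop hweak
      (fun n => validTypes_avgMeasure (hm n) (hvalid n)) hf hf0 hint hmom

end
end

section
/- Let P_n, P be probability measures on ℤ≥0 × [0,1], and let K be a probability kernel from ℤ≥0 × [0,1] into ℤ≥0 such that for every x, t ∈ ℤ≥0 the map y ↦ K((x,y), {t}) is continuous on [0,1]. If P_n → P weakly, then P_nK → PK weakly, where PK is the probability measure on ℤ≥0 defined by PK(A) = ∫ K((x,y), A) P(dx,dy). -/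
open MeasureTheory Filter ProbabilityTheory
open scoped Topology ENNReal BoundedContinuousFunction

/-!
Weak convergence `P_n → P`, tested on the bounded function `z ↦ K(z, {t})` (continuous because
`ℤ≥0` is discrete), gives `P_n K {t} → P K {t}` for every `t`. On a countable space this forces
weak convergence: by Fatou's lemma for sums, `P K (G) ≤ liminf P_n K (G)` for every set `G`,
which is the open-set criterion of the portmanteau theorem.
-/

theorem ENNReal.tsum_liminf_le_liminf_tsum {α ι : Type*} {L : Filter ι} [L.IsCountablyGenerated]
    (f : ι → α → ℝ≥0∞) : ∑' a, liminf (fun i ↦ f i a) L ≤ liminf (fun i ↦ ∑' a, f i a) L := by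
  let _ : MeasurableSpace α := ⊤
  simpa only [lintegral_count] using
    lintegral_liminf_le' (μ := Measure.count) fun i ↦ (measurable_from_top (f := f i)).aemeasurable

theorem MeasureTheory.ProbabilityMeasure.tendsto_of_tendsto_apply_singleton {α ι : Type*}
    [MeasurableSpace α] [TopologicalSpace α] [OpensMeasurableSpace α] [Countable α]
    [MeasurableSingletonClass α]
    {L : Filter ι} [L.IsCountablyGenerated] {μs : ι → ProbabilityMeasure α}
    {μ : ProbabilityMeasure α}
    (h : ∀ a, Tendsto (fun i ↦ (μs i : Measure α) {a}) L (𝓝 ((μ : Measure α) {a}))) :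
    Tendsto μs L (𝓝 μ) := by
  rcases L.eq_or_neBot with rfl | _
  · exact tendsto_bot
  refine tendsto_of_forall_isOpen_le_liminf' fun G hG ↦ ?_
  have hind : ∀ a, Tendsto (fun i ↦ G.indicator (fun b ↦ (μs i : Measure α) {b}) a) L
      (𝓝 (G.indicator (fun b ↦ (μ : Measure α) {b}) a)) := by
    intro a
    by_cases ha : a ∈ G
    · simpa only [Set.indicator_of_mem ha] using h a
    · simpa only [Set.indicator_of_notMem ha] using tendsto_const_nhds
  calc (μ : Measure α) G = ∑' a, G.indicator (fun b ↦ (μ : Measure α) {b}) a :=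
        (Measure.tsum_indicator_apply_singleton _ G hG.measurableSet).symm
    _ = ∑' a, liminf (fun i ↦ G.indicator (fun b ↦ (μs i : Measure α) {b}) a) L :=
        tsum_congr fun a ↦ (hind a).liminf_eq.symm
    _ ≤ liminf (fun i ↦ ∑' a, G.indicator (fun b ↦ (μs i : Measure α) {b}) a) L :=
        ENNReal.tsum_liminf_le_liminf_tsum _
    _ = liminf (fun i ↦ (μs i : Measure α) G) L := by
        simp only [Measure.tsum_indicator_apply_singleton _ G hG.measurableSet]

theorem MeasureTheory.Measure.bind_real_apply {α β : Type*} [MeasurableSpace α]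
    [MeasurableSpace β] (μ : Measure α) (κ : Kernel α β) [IsFiniteKernel κ] {s : Set β}
    (hs : MeasurableSet s) :
    (μ.bind κ).real s = ∫ a, (κ a).real s ∂μ := by
  rw [measureReal_def, Measure.bind_apply hs κ.aemeasurable,
    ← integral_toReal (κ.measurable_coe hs).aemeasurable (.of_forall fun _ ↦ measure_lt_top _ _)]
  rfl

/-- **Lemma (weak convergence through a kernel).**
Let `P_n, P` be probability measures on `ℤ≥0 × [0,1]` and let `K` be a probability
kernel from `ℤ≥0 × [0,1]` into `ℤ≥0` such that `y ↦ K((x,y), {t})` is continuous for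
all `x, t`. If `P_n → P` weakly, then `P_n K → P K` weakly (on the discrete space
`ℤ≥0`, tested against bounded functions). -/
theorem kernel_weak_convergence
    (Pn : ℕ → Measure (ℕ × ↥(Set.Icc (0 : ℝ) 1))) (P : Measure (ℕ × ↥(Set.Icc (0 : ℝ) 1)))
    (hPn : ∀ n, IsProbabilityMeasure (Pn n)) (hP : IsProbabilityMeasure P)
    (K : Kernel (ℕ × ↥(Set.Icc (0 : ℝ) 1)) ℕ) [IsMarkovKernel K]
    (hK : ∀ (x : ℕ) (t : ℕ),
      Continuous fun y : ↥(Set.Icc (0 : ℝ) 1) => (K (x, y) {t}).toReal)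
    (hweak : ∀ φ : ℕ × ↥(Set.Icc (0 : ℝ) 1) → ℝ, Continuous φ → (∃ C, ∀ z, |φ z| ≤ C) →
      Tendsto (fun n => ∫ z, φ z ∂(Pn n)) atTop (𝓝 (∫ z, φ z ∂P))) :
    ∀ φ : ℕ → ℝ, (∃ C, ∀ t, |φ t| ≤ C) →
      Tendsto (fun n => ∫ t, φ t ∂((Pn n).bind fun z => K z)) atTop
        (𝓝 (∫ t, φ t ∂(P.bind fun z => K z))) := by
  rintro φ ⟨C, hC⟩
  have hbind : ∀ μ : Measure (ℕ × ↥(Set.Icc (0 : ℝ) 1)), IsProbabilityMeasure μ →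
      IsProbabilityMeasure (μ.bind fun z ↦ K z) := fun μ _ ↦ inferInstance
  let νs : ℕ → ProbabilityMeasure ℕ := fun n ↦ ⟨_, hbind (Pn n) (hPn n)⟩
  let ν : ProbabilityMeasure ℕ := ⟨_, hbind P hP⟩
  have hmass : ∀ t, Tendsto (fun n ↦ (νs n : Measure ℕ) {t}) atTop (𝓝 ((ν : Measure ℕ) {t})) := by
    intro t
    have hcont : Continuous fun z ↦ (K z).real {t} :=
      continuous_prod_of_discrete_left.mpr fun x ↦ hK x t
    have hbdd : ∃ C, ∀ z, |(K z).real {t}| ≤ C :=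
      ⟨1, fun z ↦ by rw [abs_of_nonneg measureReal_nonneg]; exact measureReal_le_one⟩
    have hreal := hweak _ hcont hbdd
    simp only [← Measure.bind_real_apply _ K (measurableSet_singleton t)] at hreal
    exact (ENNReal.tendsto_toReal_iff (fun n ↦ measure_ne_top _ _) (measure_ne_top _ _)).mp hreal
  have hweakν : Tendsto νs atTop (𝓝 ν) :=
    ProbabilityMeasure.tendsto_of_tendsto_apply_singleton hmass
  let f : ℕ →ᵇ ℝ := .mkOfDiscrete φ (2 * C) fun s t ↦ by
    rw [Real.dist_eq]
    linarith [abs_sub (φ s) (φ t), hC s, hC t]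
  exact ProbabilityMeasure.tendsto_iff_forall_integral_tendsto.mp hweakν f
end

section
/- Let G_1,…,G_m be graphs with V(G_k) ⊆ V for all k, and for A ⊆ {1,…,m} let G_A denote the graph with vertex set V and edge set ∪_{a∈A} E(G_a). Then for any A, B ⊆ {1,…,m} and any t ≥ 0: |B_t(G_{A∪B})| ≤ |B_t(G_A)| + t|U_B| and N₁(G_{A∪B}) ≤ max{ |B_t(G_A)| + t|U_B|, t }, where U_B = ∪_{k∈B} V(G_k). -/
open Finset
open scoped Classical

noncomputable section

/-! An edge of `G_{A∪B}` that is not an edge of `G_A` comes from some `G_b` with `b ∈ B`, so its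
endpoints lie in `U_B`. Hence if the component of `i` grows from `G_A` to `G_{A∪B}`, the
`G_A`-component of `i` meets `U_B`. A vertex of `B_t(G_{A∪B}) \ B_t(G_A)` therefore lies in one of
at most `|U_B|` components of `G_A` with at most `t` vertices each. For `N₁`, a component with
more than `t` vertices is contained in `B_t`. -/

namespace SimpleGraph

variable {V : Type*} [Fintype V]

lemma compSize_eq_card (G : SimpleGraph V) (i : V) :
    compSize G i = #{j | G.Reachable i j} := by
  rw [compSize, Nat.card_eq_fintype_card, Fintype.card_subtype]

lemma Reachable.compSize_eq {G : SimpleGraph V} {i j : V} (h : G.Reachable i j) :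
    compSize G i = compSize G j := by
  simp only [compSize_eq_card]
  congr 1
  ext k
  simpa using ⟨h.symm.trans, h.trans⟩

lemma exists_adj_of_compSize_lt {G H : SimpleGraph V} {i : V}
    (hi : compSize G i < compSize H i) :
    ∃ x y, G.Reachable i x ∧ H.Adj x y ∧ ¬ G.Adj x y := by
  obtain ⟨j, ⟨p⟩, hj⟩ : ∃ j, H.Reachable i j ∧ ¬ G.Reachable i j := by
    by_contra! h
    rw [compSize_eq_card, compSize_eq_card] at hi
    exact hi.not_ge (card_le_card fun j => by simpa using h j)
  obtain ⟨d, -, hd, hd'⟩ := p.exists_boundary_dart {x | G.Reachable i x} (Reachable.refl i) hj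
  exact ⟨d.fst, d.snd, hd, d.adj, fun hG => hd' (hd.trans hG.reachable)⟩

lemma card_filter_reachable_compSize_le (G : SimpleGraph V) (u : V) (t : ℕ) :
    #{j | G.Reachable u j ∧ compSize G j ≤ t} ≤ t := by
  by_cases hu : compSize G u ≤ t
  · calc #{j | G.Reachable u j ∧ compSize G j ≤ t}
        ≤ #{j | G.Reachable u j} := card_le_card (monotone_filter_right _ fun _ _ h => h.1)
      _ = compSize G u := (compSize_eq_card G u).symm
      _ ≤ t := hu
  · rw [filter_false_of_mem, card_empty]
    · exact Nat.zero_le t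
    rintro j - ⟨huj, hj⟩
    exact hu (huj.compSize_eq ▸ hj)

lemma card_filter_small_reachable_le (G : SimpleGraph V) (U : Finset V) (t : ℕ) :
    #{i | compSize G i ≤ t ∧ ∃ u ∈ U, G.Reachable u i} ≤ t * #U := by
  calc #({i | compSize G i ≤ t ∧ ∃ u ∈ U, G.Reachable u i} : Finset V)
      ≤ #(U.biUnion fun u => {j | G.Reachable u j ∧ compSize G j ≤ t}) := by
        refine card_le_card fun i hi => ?_
        obtain ⟨hi, u, hu, hui⟩ := (mem_filter.1 hi).2
        exact mem_biUnion.2 ⟨u, hu, mem_filter.2 ⟨mem_univ i, hui, hi⟩⟩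
    _ ≤ ∑ u ∈ U, #{j | G.Reachable u j ∧ compSize G j ≤ t} := card_biUnion_le
    _ ≤ ∑ _u ∈ U, t := sum_le_sum fun u _ => card_filter_reachable_compSize_le G u t
    _ = t * #U := by rw [sum_const, smul_eq_mul, mul_comm]

lemma card_bigCompSet_le_add_mul {G H : SimpleGraph V} {U : Finset V}
    (hU : ∀ x y, H.Adj x y → ¬ G.Adj x y → x ∈ U) (t : ℕ) :
    #(bigCompSet H t) ≤ #(bigCompSet G t) + t * #U := by
  have hsub : bigCompSet H t ⊆
      bigCompSet G t ∪ ({i | compSize G i ≤ t ∧ ∃ u ∈ U, G.Reachable u i} : Finset V) := by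
    intro i hi
    simp only [bigCompSet, mem_union, mem_filter, mem_univ, true_and] at hi ⊢
    refine (lt_or_ge t (compSize G i)).imp id fun hGi => ⟨hGi, ?_⟩
    obtain ⟨x, y, hix, hxy, hGxy⟩ := exists_adj_of_compSize_lt (hGi.trans_lt hi)
    exact ⟨x, hU x y hxy hGxy, hix.symm⟩
  calc #(bigCompSet H t)
      ≤ #(bigCompSet G t) + #{i | compSize G i ≤ t ∧ ∃ u ∈ U, G.Reachable u i} :=
        (card_le_card hsub).trans (card_union_le _ _)
    _ ≤ #(bigCompSet G t) + t * #U := by grw [card_filter_small_reachable_le]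

lemma largestComp_le_max_card_bigCompSet (G : SimpleGraph V) (t : ℕ) :
    largestComp G ≤ max #(bigCompSet G t) t := by
  refine Finset.sup_le fun i _ => ?_
  rcases le_or_gt (compSize G i) t with hi | hi
  · exact le_max_of_le_right hi
  · refine le_max_of_le_left ?_
    rw [compSize_eq_card]
    refine card_le_card fun j hj => ?_
    simp only [bigCompSet, mem_filter, mem_univ, true_and] at hj ⊢
    exact hj.compSize_eq ▸ hi

end SimpleGraph

lemma mem_biUnion_of_adj_graphOf_union {V ι : Type*} [DecidableEq ι] {W : ι → Finset V}
    {E : ι → Finset (Sym2 V)} (hE : ∀ k, E k ⊆ pairsIn (W k)) {A B : Finset ι} {x y : V}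
    (hxy : (graphOf ((A ∪ B).biUnion E)).Adj x y) (hA : ¬ (graphOf (A.biUnion E)).Adj x y) :
    x ∈ B.biUnion W := by
  obtain ⟨k, hk, hxyk⟩ := mem_biUnion.1 hxy.2
  have hkB : k ∈ B := (mem_union.1 hk).resolve_left fun hkA =>
    hA ⟨hxy.1, mem_biUnion.2 ⟨k, hkA, hxyk⟩⟩
  have hxW : x ∈ W k := (mk_mem_sym2_iff.1 (mem_filter.1 (hE k hxyk)).1).1
  exact mem_biUnion.2 ⟨k, hkB, hxW⟩

/-- **Lemma (truncating an overlay of graphs).**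
Let `G₁, …, G_m` be graphs with vertex sets `W k ⊆ V` and edge sets `E k`, and for
`A ⊆ {1,…,m}` let `G_A` be the graph on `V` with edge set `⋃_{a ∈ A} E a`. Then for
any `A, B` and `t ≥ 0`:
`|B_t(G_{A∪B})| ≤ |B_t(G_A)| + t |U_B|` and
`N₁(G_{A∪B}) ≤ max {|B_t(G_A)| + t |U_B|, t}`, where `U_B = ⋃_{k ∈ B} W k`. -/
theorem overlay_truncation
    {V : Type*} [Fintype V] (m : ℕ)
    (W : Fin m → Finset V) (E : Fin m → Finset (Sym2 V))
    (hE : ∀ k, E k ⊆ pairsIn (W k))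
    (A B : Finset (Fin m)) (t : ℕ) :
    (bigCompSet (graphOf ((A ∪ B).biUnion E)) t).card ≤
        (bigCompSet (graphOf (A.biUnion E)) t).card + t * (B.biUnion W).card ∧
      largestComp (graphOf ((A ∪ B).biUnion E)) ≤
        max ((bigCompSet (graphOf (A.biUnion E)) t).card + t * (B.biUnion W).card) t := by
  have hcard := SimpleGraph.card_bigCompSet_le_add_mul
    (fun _ _ => mem_biUnion_of_adj_graphOf_union (A := A) (B := B) hE) t
  exact ⟨hcard, (SimpleGraph.largestComp_le_max_card_bigCompSet _ t).trans
    (max_le_max_right t hcard)⟩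

end
end

section
/- In the coupon collector's model with n coupon types, where at each round a coupon type is chosen uniformly at random among the n types independently of previous rounds, let N_t denote the number of distinct coupon types obtained after t rounds. Fix integers k, t, n ≥ 1 with 1/k ≥ 1/t + 1/n. Then P(N_t < k) ≤ (t/k)^k (n/k − n/t)^{−(t−k)}. In particular, P(N_t < k) ≤ n^{−α} whenever α + k ≤ (1−β)t and t ≤ n^{β/2} for some α > 0 and β ∈ (0,1). -/
/-!
A sample `ω` with at most `k` distinct values is determined by a `k`-set `S` of rounds containing
one representative round of every value taken, the values of `ω` on `S`, and, for each round outside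
`S`, the representative of its value. Hence at most `C(t,k) n^k k^(t-k)` of the `n^t` samples have
`N_t < k`. Since `C(t,k) k^k (t-k)^(t-k)` is one term of the expansion of `t^t = (k + (t-k))^t`,
this gives `P(N_t < k) ≤ (t/k)^k (t/(t-k))^(t-k) (k/n)^(t-k)`, which is the first bound because
`(n/k - n/t)⁻¹ = t k / (n (t-k))`. For the second, `t/k ≤ t ≤ n^(β/2)` and
`(n/k - n/t)⁻¹ ≤ t²/n ≤ n^(β-1)`, and the exponent `βk/2 + (β-1)(t-k)` is at most `-α`.
-/

open Finset
open scoped Classical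

noncomputable section

/-- Probability of an event in the coupon collector's model: `t` coupons, each chosen
uniformly at random among `n` types, independently. -/
def couponProb (n t : ℕ) (A : (Fin t → Fin n) → Prop) : ℝ :=
  ((Finset.univ.filter fun ω : Fin t → Fin n => A ω).card : ℝ) / (n : ℝ) ^ t

/-- The number `N_t` of distinct coupon types collected. -/
def distinctCount {n t : ℕ} (ω : Fin t → Fin n) : ℕ := (Finset.univ.image ω).card

open Function

lemma choose_mul_pow_mul_pow_le_add_pow {R : Type*} [CommSemiring R] [PartialOrder R]
    [IsOrderedRing R] {x y : R} (hx : 0 ≤ x) (hy : 0 ≤ y) (t k : ℕ) :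
    t.choose k * x ^ k * y ^ (t - k) ≤ (x + y) ^ t := by
  rcases lt_or_ge t k with htk | hkt
  · simp [Nat.choose_eq_zero_of_lt htk, pow_nonneg (add_nonneg hx hy)]
  calc t.choose k * x ^ k * y ^ (t - k) = x ^ k * y ^ (t - k) * t.choose k := by ring
    _ ≤ ∑ i ∈ range (t + 1), x ^ i * y ^ (t - i) * t.choose i :=
      single_le_sum (f := fun i => x ^ i * y ^ (t - i) * t.choose i) (fun i _ => by positivity)
        (mem_range.2 (Nat.lt_succ_of_le hkt))
    _ = (x + y) ^ t := (add_pow x y t).symm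

section Representative

variable {ι β : Type*}

def representative [Nonempty ι] (ω : ι → β) (i : ι) : ι := invFun ω (ω i)

lemma apply_representative [Nonempty ι] (ω : ι → β) (i : ι) : ω (representative ω i) = ω i :=
  invFun_eq ⟨i, rfl⟩

lemma card_image_representative_le [Nonempty ι] [Fintype ι] [DecidableEq ι] [DecidableEq β]
    (ω : ι → β) : #(univ.image (representative ω)) ≤ #(univ.image ω) := by
  rw [show representative ω = invFun ω ∘ ω from rfl, ← image_image]
  exact card_image_le

lemma eq_of_eqOn_of_representative_eq [Nonempty ι] {ω ω' : ι → β} {S : Set ι}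
    (hmem : ∀ i, representative ω i ∈ S) (hS : ∀ i ∈ S, ω i = ω' i)
    (hrep : ∀ i ∉ S, representative ω i = representative ω' i) : ω = ω' := by
  funext i
  by_cases hi : i ∈ S
  · exact hS i hi
  · calc ω i = ω (representative ω i) := (apply_representative ω i).symm
      _ = ω' (representative ω i) := hS _ (hmem i)
      _ = ω' (representative ω' i) := by rw [hrep i hi]
      _ = ω' i := apply_representative ω' i

lemma card_filter_representative_mem_le [Nonempty ι] [Fintype ι] [DecidableEq ι] [Fintype β]
    [DecidableEq β] (S : Finset ι) :
    #{ω : ι → β | ∀ i, representative ω i ∈ S} ≤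
      Fintype.card β ^ #S * #S ^ (Fintype.card ι - #S) := by
  let encode : {ω : ι → β // ∀ i, representative ω i ∈ S} → (S → β) × ((Sᶜ : Finset ι) → S) :=
    fun ω => (fun s => ω.1 s, fun s => ⟨representative ω.1 s, ω.2 s⟩)
  have encode_injective : Injective encode := by
    intro ω ω' h
    simp only [encode, Prod.mk.injEq, funext_iff, Subtype.forall, Subtype.mk.injEq] at h
    exact Subtype.ext
      (eq_of_eqOn_of_representative_eq ω.2 h.1 fun i hi => h.2 i (by simpa using hi))
  rw [← Fintype.card_subtype]
  simpa [Fintype.card_fun, card_compl] using Fintype.card_le_of_injective encode encode_injective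

lemma card_filter_card_image_le_le [Nonempty ι] [Fintype ι] [DecidableEq ι] [Fintype β]
    [DecidableEq β] {k : ℕ} (hk : k ≤ Fintype.card ι) :
    #{ω : ι → β | #(univ.image ω) ≤ k} ≤
      (Fintype.card ι).choose k * (Fintype.card β ^ k * k ^ (Fintype.card ι - k)) := by
  have hcover : ({ω : ι → β | #(univ.image ω) ≤ k} : Finset _) ⊆
      (powersetCard k univ).biUnion fun S => {ω : ι → β | ∀ i, representative ω i ∈ S} := by
    intro ω hω
    obtain ⟨S, hrepS, -, hS⟩ := exists_subsuperset_card_eq (subset_univ _)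
      ((card_image_representative_le ω).trans (mem_filter.1 hω).2) (by simpa using hk)
    simp only [mem_biUnion, mem_powersetCard, mem_filter, mem_univ, true_and]
    exact ⟨S, ⟨subset_univ S, hS⟩, fun i => hrepS (mem_image_of_mem _ (mem_univ i))⟩
  calc _ ≤ _ := card_le_card hcover
    _ ≤ ∑ S ∈ powersetCard k univ, #{ω : ι → β | ∀ i, representative ω i ∈ S} := card_biUnion_le
    _ ≤ ∑ S ∈ powersetCard k (univ : Finset ι), Fintype.card β ^ k * k ^ (Fintype.card ι - k) :=
      sum_le_sum fun S hS => (mem_powersetCard.1 hS).2 ▸ card_filter_representative_mem_le S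
    _ = _ := by simp

end Representative

lemma couponProb_distinctCount_lt_le {n t k : ℕ} (hn : 0 < n) (ht : 0 < t) (hkt : k ≤ t) :
    couponProb n t (fun ω => distinctCount ω < k) ≤ t.choose k * ((k : ℝ) / n) ^ (t - k) := by
  have : Nonempty (Fin t) := Fin.pos_iff_nonempty.1 ht
  have hcount : #{ω : Fin t → Fin n | distinctCount ω < k} ≤ t.choose k * (n ^ k * k ^ (t - k)) :=
    calc _ ≤ #{ω : Fin t → Fin n | #(univ.image ω) ≤ k} :=
          card_le_card fun ω hω => by
            simp only [mem_filter] at hω ⊢; exact ⟨hω.1, hω.2.le⟩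
      _ ≤ _ := by
          simpa using card_filter_card_image_le_le (ι := Fin t) (β := Fin n) (by simpa using hkt)
  have hsplit : (n : ℝ) ^ t = n ^ k * n ^ (t - k) := by rw [← pow_add, Nat.add_sub_cancel' hkt]
  rw [couponProb, filter_congr_decidable, div_le_iff₀ (by positivity), hsplit, div_pow]
  calc _ ≤ (t.choose k * (n ^ k * k ^ (t - k)) : ℝ) := by exact_mod_cast hcount
    _ = _ := by field_simp

lemma choose_mul_div_pow_le {n t k : ℕ} (hn : 0 < n) (hk : 0 < k) (hkt : k < t) :
    t.choose k * ((k : ℝ) / n) ^ (t - k) ≤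
      ((t : ℝ) / k) ^ k * (((n : ℝ) / k - n / t) ^ (t - k))⁻¹ := by
  have hk0 : (0 : ℝ) < k := Nat.cast_pos.2 hk
  have hkt' : (0 : ℝ) < t - k := sub_pos.2 (Nat.cast_lt.2 hkt)
  have hbinom := choose_mul_pow_mul_pow_le_add_pow hk0.le hkt'.le t k
  rw [add_sub_cancel] at hbinom
  have hinv : ((n : ℝ) / k - n / t)⁻¹ = t / (t - k) * (k / n) := by
    have : (t : ℝ) ≠ 0 := Nat.cast_ne_zero.2 (by omega)
    field_simp
  rw [← inv_pow, hinv, mul_pow, ← mul_assoc]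
  gcongr ?_ * _
  rw [div_pow, div_pow, div_mul_div_comm, ← pow_add, Nat.add_sub_cancel' hkt.le,
    le_div_iff₀ (by positivity)]
  linarith

lemma inv_div_sub_div_le_sq_div {n t k : ℝ} (hn : 0 < n) (hk : 0 < k) (hkt : k + 1 ≤ t) :
    (n / k - n / t)⁻¹ ≤ t ^ 2 / n := by
  have ht : 0 < t := by linarith
  have key : k * t ≤ t ^ 2 * (t - k) := by nlinarith
  rw [div_sub_div _ _ hk.ne' ht.ne', inv_div, div_le_div_iff₀ (by nlinarith) hn]
  nlinarith [mul_le_mul_of_nonneg_right key hn.le]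

lemma div_pow_mul_inv_pow_le_rpow_neg {n t k : ℕ} {α β : ℝ} (hn : 1 ≤ n) (hk : 1 ≤ k)
    (hkt : k < t) (hβ : 0 ≤ β) (hαβ : α + k ≤ (1 - β) * t) (htn : (t : ℝ) ≤ (n : ℝ) ^ (β / 2)) :
    ((t : ℝ) / k) ^ k * (((n : ℝ) / k - n / t) ^ (t - k))⁻¹ ≤ (n : ℝ) ^ (-α) := by
  have hn0 : (0 : ℝ) < n := Nat.cast_pos.2 hn
  have hpos : (0 : ℝ) < (n : ℝ) / k - n / t :=
    sub_pos.2 (div_lt_div_of_pos_left hn0 (by exact_mod_cast hk) (by exact_mod_cast hkt))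
  have hfirst : ((t : ℝ) / k) ^ k ≤ (n : ℝ) ^ (β / 2 * k) :=
    calc ((t : ℝ) / k) ^ k ≤ (t : ℝ) ^ k :=
          pow_le_pow_left₀ (by positivity) (div_le_self (by positivity) (by exact_mod_cast hk)) k
      _ ≤ ((n : ℝ) ^ (β / 2)) ^ k := pow_le_pow_left₀ (by positivity) htn k
      _ = _ := by rw [← Real.rpow_natCast, ← Real.rpow_mul hn0.le]
  have hsecond : (((n : ℝ) / k - n / t) ^ (t - k))⁻¹ ≤ (n : ℝ) ^ ((β - 1) * (t - k : ℕ)) := by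
    have hsq : (t : ℝ) ^ 2 ≤ (n : ℝ) ^ β := by
      calc (t : ℝ) ^ 2 ≤ ((n : ℝ) ^ (β / 2)) ^ 2 := pow_le_pow_left₀ (by positivity) htn 2
        _ = _ := by rw [← Real.rpow_natCast, ← Real.rpow_mul hn0.le]; norm_num
    rw [← inv_pow, Real.rpow_mul hn0.le, Real.rpow_natCast]
    refine pow_le_pow_left₀ (inv_nonneg.2 hpos.le) ?_ _
    calc _ ≤ (t : ℝ) ^ 2 / n :=
          inv_div_sub_div_le_sq_div hn0 (by exact_mod_cast hk) (by exact_mod_cast hkt)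
      _ ≤ (n : ℝ) ^ β / n := by gcongr
      _ = _ := by rw [Real.rpow_sub_one hn0.ne']
  calc _ ≤ (n : ℝ) ^ (β / 2 * k) * (n : ℝ) ^ ((β - 1) * (t - k : ℕ)) :=
        mul_le_mul hfirst hsecond (by positivity) (by positivity)
    _ = (n : ℝ) ^ (β / 2 * k + (β - 1) * (t - k : ℕ)) := (Real.rpow_add hn0 _ _).symm
    _ ≤ (n : ℝ) ^ (-α) := by
        refine Real.rpow_le_rpow_of_exponent_le (by exact_mod_cast hn) ?_
        push_cast [Nat.cast_sub hkt.le]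
        nlinarith [mul_nonneg hβ (Nat.cast_nonneg (α := ℝ) k)]

/-- **Lemma (coupon collection).**
Fix `k, t, n ≥ 1` with `1/k ≥ 1/t + 1/n`. Then
`P(N_t < k) ≤ (t/k)^k (n/k - n/t)^{-(t-k)}`; in particular `P(N_t < k) ≤ n^{-α}`
whenever `α + k ≤ (1-β) t` and `t ≤ n^{β/2}` for some `α > 0` and `β ∈ (0,1)`. -/
theorem coupon_collection
    (n t k : ℕ) (hn : 1 ≤ n) (ht : 1 ≤ t) (hk : 1 ≤ k)
    (h : (1 : ℝ) / t + 1 / n ≤ 1 / k) :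
    couponProb n t (fun ω => distinctCount ω < k) ≤
        ((t : ℝ) / k) ^ k * (((n : ℝ) / k - (n : ℝ) / t) ^ (t - k))⁻¹ ∧
      ∀ α β : ℝ, 0 < α → 0 < β → β < 1 →
        α + k ≤ (1 - β) * t → (t : ℝ) ≤ (n : ℝ) ^ (β / 2) →
          couponProb n t (fun ω => distinctCount ω < k) ≤ (n : ℝ) ^ (-α) := by
  have hkt : k < t := by
    have : (0 : ℝ) < 1 / n := by positivity
    exact_mod_cast lt_of_one_div_lt_one_div (by positivity) (by linarith : (1 : ℝ) / t < 1 / k)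
  have hbound :=
    (couponProb_distinctCount_lt_le hn ht hkt.le).trans (choose_mul_div_pow_le hn hk hkt)
  exact ⟨hbound, fun α β _ hβ _ hαβ htn =>
    hbound.trans (div_pow_mul_inv_pow_le_rpow_neg hn hk hkt hβ.le hαβ htn)⟩

end
end
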